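/- arXiv:2204.01806 — 10 statements merged into one kernel-verified Lean document; each statement's English description precedes it below -/
import Mathlib

section
/- Let {x^k} and {d^k} be sequences in ℝⁿ such that the series ∑_{k=1}^∞ ‖x^{k+1} − x^k‖·‖d^k‖ converges. If x̄ is an accumulation point of {x^k} and 0 is an accumulation point of {d^k}, then there exists an infinite set J ⊂ ℕ (equivalently, a strictly increasing sequence of indices) such that x^k → x̄ and d^k → 0 as k → ∞ along J. -/
open Filter

/-- If `∑ ‖x^{k+1} - x^k‖ · ‖d^k‖ < ∞`, `xbar` is an accumulation point of `{x^k}` and `0`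
is an accumulation point of `{d^k}`, then there is a common subsequence along which
`x^k → xbar` and `d^k → 0`. -/
theorem stmt0 {n : ℕ} (x d : ℕ → EuclideanSpace ℝ (Fin n))
    (hsum : Summable (fun k => ‖x (k + 1) - x k‖ * ‖d k‖))
    (xbar : EuclideanSpace ℝ (Fin n))
    (hx : ∃ φ : ℕ → ℕ, StrictMono φ ∧ Tendsto (x ∘ φ) atTop (nhds xbar))
    (hd : ∃ φ : ℕ → ℕ, StrictMono φ ∧ Tendsto (d ∘ φ) atTop (nhds 0)) :
    ∃ φ : ℕ → ℕ, StrictMono φ ∧ Tendsto (x ∘ φ) atTop (nhds xbar) ∧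
      Tendsto (d ∘ φ) atTop (nhds 0) := by
  obtain ⟨α, hα, hαx⟩ := hx
  obtain ⟨β, hβ, hβd⟩ := hd
  set f : ℕ → ℝ := fun k => ‖x (k + 1) - x k‖ * ‖d k‖ with hfdef
  have hf0 : ∀ k, 0 ≤ f k := fun k => mul_nonneg (norm_nonneg _) (norm_nonneg _)
  have hxfreq : ∀ ε > (0:ℝ), ∀ N, ∃ k, N ≤ k ∧ dist (x k) xbar < ε := by
    intro ε hε N
    rw [Metric.tendsto_atTop] at hαx
    obtain ⟨K, hK⟩ := hαx ε hε
    exact ⟨α (max K N), le_trans (le_max_right K N) hα.le_apply, hK _ (le_max_left _ _)⟩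
  have hdfreq : ∀ δ > (0:ℝ), ∀ N, ∃ k, N ≤ k ∧ ‖d k‖ < δ := by
    intro δ hδ N
    rw [Metric.tendsto_atTop] at hβd
    obtain ⟨K, hK⟩ := hβd δ hδ
    refine ⟨β (max K N), le_trans (le_max_right K N) hβ.le_apply, ?_⟩
    simpa [dist_eq_norm] using hK _ (le_max_left K N)
  -- key claim
  have key : ∀ ε > (0:ℝ), ∀ N, ∃ k, N ≤ k ∧ dist (x k) xbar < ε ∧ ‖d k‖ < ε := by
    intro ε hε N
    by_contra hcon
    push_neg at hcon
    -- hcon : ∀ k, N ≤ k → dist (x k) xbar < ε → ε ≤ ‖d k‖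
    -- pick P0 ≥ N with small tail
    have htail := tendsto_sum_nat_add f
    rw [Metric.tendsto_atTop] at htail
    obtain ⟨P1, hP1⟩ := htail (ε * ε / 2) (by positivity)
    set P0 := max P1 N with hP0def
    have htail0 : ∑' k, f (k + P0) < ε * ε / 2 := by
      have := hP1 P0 (le_max_left _ _)
      rw [Real.dist_eq, sub_zero] at this
      calc ∑' k, f (k + P0) ≤ |∑' k, f (k + P0)| := le_abs_self _
        _ < ε * ε / 2 := this
    obtain ⟨P, hPge, hPx⟩ := hxfreq (ε / 2) (by positivity) P0
    obtain ⟨Q, hQge, hQd⟩ := hdfreq ε hε (P + 1)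
    have hNP : N ≤ P := le_trans (le_max_right P1 N) hPge
    have hQx : ε ≤ dist (x Q) xbar := by
      by_contra hq
      push_neg at hq
      exact absurd (hcon Q (le_trans hNP (by omega)) hq) (not_le.mpr hQd)
    -- first index m in (P, Q] with dist (x m) xbar ≥ ε
    have hex : ∃ m, P < m ∧ m ≤ Q ∧ ε ≤ dist (x m) xbar := ⟨Q, by omega, le_rfl, hQx⟩
    classical
    obtain ⟨m, ⟨hmP, hmQ, hmx⟩, hmin⟩ := Nat.lt_wfRel.wf.has_min
      {m | P < m ∧ m ≤ Q ∧ ε ≤ dist (x m) xbar} hex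
    -- for P ≤ j < m, dist (x j) xbar < ε
    have hsmall : ∀ j, P ≤ j → j < m → dist (x j) xbar < ε := by
      intro j hPj hjm
      rcases eq_or_lt_of_le hPj with h | h
      · exact h ▸ lt_of_lt_of_le hPx (by linarith)
      · by_contra hge
        push_neg at hge
        exact hmin j ⟨h, le_trans (le_of_lt hjm) hmQ, hge⟩ hjm
    -- hence steps bounded
    have hstep : ∀ j, P ≤ j → j < m → dist (x j) (x (j + 1)) * ε ≤ f j := by
      intro j hPj hjm
      have hdj : ε ≤ ‖d j‖ := hcon j (le_trans hNP hPj) (hsmall j hPj hjm)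
      have : dist (x j) (x (j+1)) = ‖x (j+1) - x j‖ := by
        rw [dist_eq_norm, norm_sub_rev]
      rw [this]
      exact mul_le_mul_of_nonneg_left hdj (norm_nonneg _)
    have hsummul : Summable (fun k => f (k + P0)) := (summable_nat_add_iff P0).mpr hsum
    have hsumbound : ∑ j ∈ Finset.Ico P m, f j ≤ ∑' k, f (k + P0) := by
      have h1 : ∑ j ∈ Finset.Ico P m, f j ≤ ∑ j ∈ Finset.Ico P0 m, f j := by
        apply Finset.sum_le_sum_of_subset_of_nonneg
        · exact Finset.Ico_subset_Ico hPge le_rfl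
        · intro i _ _; exact hf0 i
      have h2 : ∑ j ∈ Finset.Ico P0 m, f j = ∑ i ∈ Finset.range (m - P0), f (i + P0) := by
        rw [Finset.sum_Ico_eq_sum_range]
        exact Finset.sum_congr rfl fun i _ => by rw [add_comm]
      rw [h2] at h1
      exact le_trans h1 (Summable.sum_le_tsum _ (fun i _ => hf0 _) hsummul)
    have hdistsum : dist (x P) (x m) ≤ (∑ j ∈ Finset.Ico P m, f j) / ε := by
      have h1 : dist (x P) (x m) ≤ ∑ j ∈ Finset.Ico P m, dist (x j) (x (j+1)) :=
        dist_le_Ico_sum_dist x (le_of_lt hmP)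
      have h2 : (∑ j ∈ Finset.Ico P m, dist (x j) (x (j+1))) * ε ≤ ∑ j ∈ Finset.Ico P m, f j := by
        rw [Finset.sum_mul]
        apply Finset.sum_le_sum
        intro j hj
        rw [Finset.mem_Ico] at hj
        exact hstep j hj.1 hj.2
      rw [le_div_iff₀ hε]
      calc dist (x P) (x m) * ε ≤ (∑ j ∈ Finset.Ico P m, dist (x j) (x (j+1))) * ε :=
            mul_le_mul_of_nonneg_right h1 (le_of_lt hε)
        _ ≤ _ := h2
    have hfinal : dist (x m) xbar < ε := by
      have : dist (x P) (x m) < ε / 2 := by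
        calc dist (x P) (x m) ≤ (∑ j ∈ Finset.Ico P m, f j) / ε := hdistsum
          _ < ε / 2 := by
              rw [div_lt_iff₀ hε]
              calc ∑ j ∈ Finset.Ico P m, f j ≤ ∑' k, f (k + P0) := hsumbound
                _ < ε * ε / 2 := htail0
                _ = ε / 2 * ε := by ring
      calc dist (x m) xbar ≤ dist (x m) (x P) + dist (x P) xbar := dist_triangle _ _ _
        _ < ε / 2 + ε / 2 := by rw [dist_comm]; exact add_lt_add this hPx
        _ = ε := by ring
    exact absurd hmx (not_le.mpr hfinal)
  -- extraction
  have hfreq : ∀ n : ℕ, ∃ᶠ k in atTop, dist (x k) xbar < 1 / (n + 1) ∧ ‖d k‖ < 1 / (n + 1) := by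
    intro n
    rw [frequently_atTop]
    intro N
    obtain ⟨k, hk, h1, h2⟩ := key (1 / (n + 1)) (by positivity) N
    exact ⟨k, hk, h1, h2⟩
  obtain ⟨φ, hφmono, hφ⟩ := extraction_forall_of_frequently hfreq
  refine ⟨φ, hφmono, ?_, ?_⟩
  · rw [Metric.tendsto_atTop]
    intro ε hε
    obtain ⟨M, hM⟩ := exists_nat_one_div_lt hε
    refine ⟨M, fun k hk => ?_⟩
    calc dist ((x ∘ φ) k) xbar < 1 / (k + 1) := (hφ k).1
      _ ≤ 1 / (M + 1) := by
          apply one_div_le_one_div_of_le (by positivity)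
          exact_mod_cast Nat.succ_le_succ hk
      _ < ε := hM
  · rw [Metric.tendsto_atTop]
    intro ε hε
    obtain ⟨M, hM⟩ := exists_nat_one_div_lt hε
    refine ⟨M, fun k hk => ?_⟩
    rw [Function.comp_apply, dist_eq_norm, sub_zero]
    calc ‖d (φ k)‖ < 1 / (k + 1) := (hφ k).2
      _ ≤ 1 / (M + 1) := by
          apply one_div_le_one_div_of_le (by positivity)
          exact_mod_cast Nat.succ_le_succ hk
      _ < ε := hM
end

section
/- Let f: ℝⁿ → ℝ be continuously differentiable and let {x^k} be generated by a linesearch method x^{k+1} = x^k + t_k d^k with t_k ≥ 0. Assume that: (a) {d^k} is gradient associated with {x^k}; (b) 0 is an accumulation point of {d^k}; (c) ∑_{k=1}^∞ t_k ‖d^k‖² < ∞. Then every accumulation point x̄ of {x^k} is a stationary point of f, i.e., ∇f(x̄) = 0. -/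
/-!
If `∇f(x̄) ≠ 0`, then `‖∇f‖ ≥ c > 0` on a ball `B(x̄, r)`, and gradient association yields
`ε > 0` with `‖d^k‖ ≥ ε` for all large `k` with `x^k ∈ B(x̄, r)`. For those `k` the step length
`t_k ‖d^k‖` is at most `t_k ‖d^k‖² / ε`, a summable quantity, so once the iterates come close
enough to `x̄` late enough they can never leave `B(x̄, r)` again. Then `‖d^k‖ ≥ ε` for all large
`k`, contradicting that `0` is an accumulation point of `{d^k}`.
-/

open Filter Topology Metric

theorem exists_pos_le_norm_of_comp_tendsto_zero {E F : Type*} [SeminormedAddCommGroup E]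
    [SeminormedAddCommGroup F] {u : ℕ → E} {v : ℕ → F}
    (huv : ∀ φ : ℕ → ℕ, StrictMono φ → Tendsto (u ∘ φ) atTop (𝓝 0) →
      Tendsto (v ∘ φ) atTop (𝓝 0))
    {c : ℝ} (hc : 0 < c) : ∃ ε > 0, ∀ᶠ k in atTop, c ≤ ‖v k‖ → ε ≤ ‖u k‖ := by
  by_contra! h
  have hfreq : ∀ m : ℕ, ∃ᶠ k in atTop, c ≤ ‖v k‖ ∧ ‖u k‖ < 1 / (m + 1) := by
    intro m
    simpa [not_eventually] using h (1 / (m + 1)) (by positivity)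
  obtain ⟨φ, hφ, hφP⟩ := extraction_forall_of_frequently hfreq
  have hu : Tendsto (u ∘ φ) atTop (𝓝 0) := by
    rw [tendsto_zero_iff_norm_tendsto_zero]
    exact squeeze_zero (fun _ => norm_nonneg _) (fun m => (hφP m).2.le)
      tendsto_one_div_add_atTop_nhds_zero_nat
  have hv := tendsto_zero_iff_norm_tendsto_zero.mp (huv φ hφ hu)
  have : c ≤ 0 := ge_of_tendsto' hv fun m => (hφP m).1
  linarith

theorem eventually_mem_ball_of_summable_steps {α : Type*} [PseudoMetricSpace α] {x : ℕ → α}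
    {s : ℕ → ℝ} {a : α} {r : ℝ} (hr : 0 < r) (hs0 : ∀ k, 0 ≤ s k) (hs : Summable s)
    (hstep : ∀ᶠ k in atTop, x k ∈ ball a r → dist (x (k + 1)) (x k) ≤ s k)
    (ha : MapClusterPt a atTop x) : ∀ᶠ k in atTop, x k ∈ ball a r := by
  have htail : ∀ᶠ i in atTop, ∑' k, s (k + i) < r / 2 :=
    (tendsto_sum_nat_add s).eventually (gt_mem_nhds (half_pos hr))
  obtain ⟨k₀, hk₀a, hk₀tail, hk₀step⟩ :=
    ((mapClusterPt_iff_frequently.mp ha _ (ball_mem_nhds a (half_pos hr))).and_eventually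
      (htail.and (eventually_forall_ge_atTop.mpr hstep))).exists
  have hpartial (m : ℕ) : ∑ j ∈ Finset.range m, s (j + k₀) < r / 2 :=
    ((summable_nat_add_iff k₀).mpr hs |>.sum_le_tsum _ fun j _ => hs0 _).trans_lt hk₀tail
  have hin (m : ℕ) (hm : dist (x (m + k₀)) (x k₀) ≤ ∑ j ∈ Finset.range m, s (j + k₀)) :
      x (m + k₀) ∈ ball a r := by
    have := dist_triangle (x (m + k₀)) (x k₀) a
    rw [mem_ball] at hk₀a ⊢
    linarith [hpartial m]
  have hdrift (m : ℕ) : dist (x (m + k₀)) (x k₀) ≤ ∑ j ∈ Finset.range m, s (j + k₀) := by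
    induction m with
    | zero => simp
    | succ m ih =>
      calc dist (x (m + 1 + k₀)) (x k₀)
          ≤ dist (x (m + k₀ + 1)) (x (m + k₀)) + dist (x (m + k₀)) (x k₀) := by
            rw [Nat.add_right_comm]; exact dist_triangle _ _ _
        _ ≤ s (m + k₀) + ∑ j ∈ Finset.range m, s (j + k₀) :=
            add_le_add (hk₀step _ (Nat.le_add_left _ _) (hin m ih)) ih
        _ = ∑ j ∈ Finset.range (m + 1), s (j + k₀) := by rw [Finset.sum_range_succ, add_comm]
  refine eventually_atTop.mpr ⟨k₀, fun k hk => ?_⟩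
  obtain ⟨m, rfl⟩ := Nat.exists_eq_add_of_le' hk
  exact hin m (hdrift m)

theorem norm_smul_le_mul_sq_div {E : Type*} [SeminormedAddCommGroup E] [NormedSpace ℝ E]
    {t ε : ℝ} {v : E} (ht : 0 ≤ t) (hε : 0 < ε) (hv : ε ≤ ‖v‖) :
    ‖t • v‖ ≤ t * ‖v‖ ^ 2 / ε := by
  rw [le_div_iff₀ hε, norm_smul, Real.norm_of_nonneg ht, sq, ← mul_assoc]
  exact mul_le_mul_of_nonneg_left hv (by positivity)

/-- Theorem 3.3 (main part): for a linesearch method `x^{k+1} = x^k + t_k d^k` with a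
gradient associated direction sequence, `0` an accumulation point of `{d^k}`, and
`∑ t_k ‖d^k‖² < ∞`, every accumulation point of `{x^k}` is a stationary point of `f`. -/
theorem stmt2 {n : ℕ} (f : EuclideanSpace ℝ (Fin n) → ℝ) (hf : ContDiff ℝ 1 f)
    (x d : ℕ → EuclideanSpace ℝ (Fin n)) (t : ℕ → ℝ)
    (ht : ∀ k, 0 ≤ t k)
    (hstep : ∀ k, x (k + 1) = x k + t k • d k)
    (hga : ∀ φ : ℕ → ℕ, StrictMono φ → Tendsto (d ∘ φ) atTop (nhds 0) →
      Tendsto (fun k => gradient f (x (φ k))) atTop (nhds 0))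
    (hd0 : ∃ φ : ℕ → ℕ, StrictMono φ ∧ Tendsto (d ∘ φ) atTop (nhds 0))
    (hsum : Summable (fun k => t k * ‖d k‖ ^ 2))
    (xbar : EuclideanSpace ℝ (Fin n))
    (hacc : ∃ φ : ℕ → ℕ, StrictMono φ ∧ Tendsto (x ∘ φ) atTop (nhds xbar)) :
    gradient f xbar = 0 := by
  by_contra hne
  have hpos : 0 < ‖gradient f xbar‖ := norm_pos_iff.mpr hne
  have hgrad : Continuous (gradient f) :=
    (InnerProductSpace.toDual ℝ _).symm.continuous.comp (hf.continuous_fderiv one_ne_zero)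
  obtain ⟨r, hr, hball⟩ : ∃ r > 0, ball xbar r ⊆ {y | ‖gradient f xbar‖ / 2 ≤ ‖gradient f y‖} :=
    Metric.mem_nhds_iff.mp <| hgrad.norm.continuousAt.eventually <|
      eventually_ge_nhds (half_lt_self hpos)
  obtain ⟨ε, hε, hdlow⟩ :=
    exists_pos_le_norm_of_comp_tendsto_zero (v := gradient f ∘ x) hga (half_pos hpos)
  have hmem : ∀ᶠ k in atTop, x k ∈ ball xbar r := by
    obtain ⟨φ, hφ, hxφ⟩ := hacc
    refine eventually_mem_ball_of_summable_steps hr (fun k => by have := ht k; positivity)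
      (hsum.div_const ε) (hdlow.mono fun k hk hx => ?_)
      (hxφ.mapClusterPt.of_comp hφ.tendsto_atTop)
    rw [hstep, dist_eq_norm, add_sub_cancel_left]
    exact norm_smul_le_mul_sq_div (ht k) hε (hk (hball hx))
  obtain ⟨ψ, hψ, hdψ⟩ := hd0
  have hsmall : ∀ᶠ j in atTop, ‖d (ψ j)‖ < ε :=
    (tendsto_zero_iff_norm_tendsto_zero.mp hdψ).eventually (eventually_lt_nhds hε)
  have hlarge : ∀ᶠ j in atTop, ε ≤ ‖d (ψ j)‖ :=
    hψ.tendsto_atTop.eventually ((hdlow.and hmem).mono fun k hk => hk.1 (hball hk.2))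
  obtain ⟨j, hlt, hle⟩ := (hsmall.and hlarge).exists
  exact hlt.not_ge hle
end

section
/- Let f: ℝⁿ → ℝ be continuously differentiable and let {x^k} be generated by x^{k+1} = x^k + t_k d^k with t_k ≥ 0, where ∑_{k=1}^∞ t_k ‖d^k‖² < ∞ and {t_k} is bounded from above. If the sequence {x^k} is bounded, then the set of accumulation points of {x^k} is nonempty, compact, and connected in ℝⁿ. -/
open Filter Metric Set Topology

/-!
The cluster points of a sequence eventually lying in a compact set form a nonempty compact set.
Since `t k ≤ T`, the steps satisfy `‖t k • d k‖² ≤ T · t k ‖d k‖² → 0`. If the cluster set split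
into disjoint closed nonempty parts `A₁`, `A₂`, with `infDist · A₁ ≥ δ > 0` on `A₂`, then along
the sequence the `1`-Lipschitz function `infDist · A₁` would drop below `δ/3` and rise above
`2δ/3` infinitely often with eventually small increments, so it would land in `[δ/3, 2δ/3]`
infinitely often; compactness then yields a cluster point in neither part.
-/

theorem frequently_mem_Icc_of_frequently_lt_of_frequently_gt {g : ℕ → ℝ} {a b : ℝ}
    (hlt : ∃ᶠ k in atTop, g k < a) (hgt : ∃ᶠ k in atTop, b < g k)
    (hstep : ∀ᶠ k in atTop, |g (k + 1) - g k| ≤ b - a) :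
    ∃ᶠ k in atTop, g k ∈ Icc a b := by
  by_contra hIcc
  obtain ⟨N, hN⟩ := eventually_atTop.1 ((not_frequently.1 hIcc).and hstep)
  obtain ⟨j, hjN, hj⟩ := frequently_atTop.1 hlt N
  have hbelow : ∀ m ≥ j, g m < a := by
    intro m hm
    induction m, hm using Nat.le_induction with
    | base => exact hj
    | succ m hjm ih =>
      have hlt_b : g (m + 1) < b := by
        linarith [le_abs_self (g (m + 1) - g m), (hN m (hjN.trans hjm)).2]
      by_contra hge
      exact (hN (m + 1) (by omega)).1 ⟨not_lt.1 hge, hlt_b.le⟩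
  obtain ⟨m, hm, hbm⟩ := frequently_atTop.1 hgt j
  have hab : a ≤ b := by linarith [abs_nonneg (g (N + 1) - g N), (hN N le_rfl).2]
  linarith [hbelow m hm]

theorem IsCompact.exists_pos_le_infDist {α : Type*} [PseudoMetricSpace α] {s t : Set α}
    (hs : IsCompact s) (ht : IsClosed t) (htne : t.Nonempty) (hst : Disjoint s t) :
    ∃ δ > 0, ∀ z ∈ s, δ ≤ infDist z t := by
  obtain ⟨r, hr, h⟩ := exists_pos_forall_lt_edist hs ht hst
  refine ⟨r, hr, fun z hz => (le_infDist htne).2 fun y hy => ?_⟩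
  have hzy := h z hz y hy
  rw [edist_nndist, ENNReal.coe_lt_coe] at hzy
  exact hzy.le

theorem tendsto_norm_smul_of_summable_mul_norm_sq {E : Type*} [SeminormedAddCommGroup E]
    [NormedSpace ℝ E] {t : ℕ → ℝ} {d : ℕ → E} {T : ℝ} (ht : ∀ k, 0 ≤ t k) (hT : ∀ k, t k ≤ T)
    (hsum : Summable fun k => t k * ‖d k‖ ^ 2) :
    Tendsto (fun k => ‖t k • d k‖) atTop (𝓝 0) := by
  have hbound : ∀ k, ‖t k • d k‖ ^ 2 ≤ T * (t k * ‖d k‖ ^ 2) := fun k =>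
    calc ‖t k • d k‖ ^ 2 = t k * (t k * ‖d k‖ ^ 2) := by
          rw [norm_smul, Real.norm_of_nonneg (ht k)]; ring
      _ ≤ T * (t k * ‖d k‖ ^ 2) := by gcongr; exacts [mul_nonneg (ht k) (by positivity), hT k]
  have hsq : Tendsto (fun k => ‖t k • d k‖ ^ 2) atTop (𝓝 0) :=
    squeeze_zero (fun k => by positivity) hbound (by simpa using hsum.tendsto_atTop_zero.const_mul T)
  simpa [Real.sqrt_sq (norm_nonneg _)] using hsq.sqrt

theorem setOf_exists_strictMono_tendsto_eq_setOf_mapClusterPt {α : Type*} [TopologicalSpace α]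
    [FirstCountableTopology α] (u : ℕ → α) :
    {y | ∃ φ : ℕ → ℕ, StrictMono φ ∧ Tendsto (u ∘ φ) atTop (𝓝 y)} =
      {y | MapClusterPt y atTop u} :=
  Set.ext fun _ =>
    ⟨fun ⟨_, hφ, hlim⟩ => hlim.mapClusterPt.of_comp hφ.tendsto_atTop,
      MapClusterPt.tendsto_subseq⟩

section ClusterSet

variable {α ι : Type*} [TopologicalSpace α] {l : Filter ι} {u : ι → α} {K : Set α}

theorem nonempty_setOf_mapClusterPt [l.NeBot] (hK : IsCompact K) (huK : ∀ᶠ k in l, u k ∈ K) :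
    {y | MapClusterPt y l u}.Nonempty :=
  let ⟨y, _, hy⟩ := hK.exists_mapClusterPt_of_frequently huK.frequently
  ⟨y, hy⟩

theorem isCompact_setOf_mapClusterPt [T2Space α] (hK : IsCompact K) (huK : ∀ᶠ k in l, u k ∈ K) :
    IsCompact {y | MapClusterPt y l u} :=
  hK.of_isClosed_subset isClosed_setOfPred_clusterPt fun _ hy =>
    hK.isClosed.closure_eq ▸ ClusterPt.mem_closure_of_mem hy K huK

end ClusterSet

theorem isPreconnected_setOf_mapClusterPt_of_tendsto_dist_succ {α : Type*} [MetricSpace α]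
    {u : ℕ → α} {K : Set α} (hK : IsCompact K) (huK : ∀ᶠ k in atTop, u k ∈ K)
    (hu : Tendsto (fun k => dist (u (k + 1)) (u k)) atTop (𝓝 0)) :
    IsPreconnected {y | MapClusterPt y atTop u} := by
  set A := {y | MapClusterPt y atTop u}
  rw [isPreconnected_closed_iff]
  rintro t t' ht ht' hcover ⟨a, haA, hat⟩ ⟨b, hbA, hbt'⟩
  by_contra hdisj
  have hA₁ : IsClosed (A ∩ t) := isClosed_setOfPred_clusterPt.inter ht
  have hA₂ : IsCompact (A ∩ t') :=
    (isCompact_setOf_mapClusterPt hK huK).inter_right ht'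
  obtain ⟨δ, hδ, hsep⟩ := hA₂.exists_pos_le_infDist hA₁ ⟨a, haA, hat⟩ <|
    Set.disjoint_left.2 fun z hz₂ hz₁ => hdisj ⟨z, hz₁.1, hz₁.2, hz₂.2⟩
  set g := fun z => infDist z (A ∩ t)
  have hg : Continuous g := continuous_infDist_pt _
  have hlow : ∃ᶠ k in atTop, g (u k) < δ / 3 := by
    refine mapClusterPt_iff_frequently.1 haA _ ((isOpen_lt hg continuous_const).mem_nhds ?_)
    show g a < δ / 3
    rw [show g a = 0 from infDist_zero_of_mem ⟨haA, hat⟩]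
    positivity
  have hhigh : ∃ᶠ k in atTop, 2 * δ / 3 < g (u k) := by
    refine mapClusterPt_iff_frequently.1 hbA _ ((isOpen_lt continuous_const hg).mem_nhds ?_)
    show 2 * δ / 3 < g b
    linarith [hsep b ⟨hbA, hbt'⟩]
  have hstep : ∀ᶠ k in atTop, |g (u (k + 1)) - g (u k)| ≤ 2 * δ / 3 - δ / 3 := by
    filter_upwards [(hu.eventually (gt_mem_nhds (by positivity : 0 < δ / 3)))] with k hk
    have := (lipschitz_infDist_pt (A ∩ t)).dist_le_mul (u (k + 1)) (u k)
    rw [Real.dist_eq, NNReal.coe_one, one_mul] at this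
    linarith
  have hC : IsClosed (g ⁻¹' Icc (δ / 3) (2 * δ / 3)) := isClosed_Icc.preimage hg
  obtain ⟨y, ⟨-, hyC⟩, hyA⟩ := (hK.inter_right hC).exists_mapClusterPt_of_frequently <|
    ((frequently_mem_Icc_of_frequently_lt_of_frequently_gt hlow hhigh hstep).and_eventually
      huK).mono fun k hk => ⟨hk.2, hk.1⟩
  rcases hcover hyA with hyt | hyt'
  · have hgy : g y = 0 := infDist_zero_of_mem ⟨hyA, hyt⟩
    linarith [hyC.1]
  · linarith [hyC.2, hsep y ⟨hyA, hyt'⟩]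

theorem stmt3_general {n : ℕ}
    (x d : ℕ → EuclideanSpace ℝ (Fin n)) (t : ℕ → ℝ)
    (ht : ∀ k, 0 ≤ t k)
    (hstep : ∀ k, x (k + 1) = x k + t k • d k)
    (hsum : Summable (fun k => t k * ‖d k‖ ^ 2))
    (T : ℝ) (hT : ∀ k, t k ≤ T)
    (hbdd : Bornology.IsBounded (Set.range x)) :
    ({y : EuclideanSpace ℝ (Fin n) |
        ∃ φ : ℕ → ℕ, StrictMono φ ∧ Tendsto (x ∘ φ) atTop (nhds y)}).Nonempty ∧
    IsCompact {y : EuclideanSpace ℝ (Fin n) |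
        ∃ φ : ℕ → ℕ, StrictMono φ ∧ Tendsto (x ∘ φ) atTop (nhds y)} ∧
    IsConnected {y : EuclideanSpace ℝ (Fin n) |
        ∃ φ : ℕ → ℕ, StrictMono φ ∧ Tendsto (x ∘ φ) atTop (nhds y)} := by
  rw [setOf_exists_strictMono_tendsto_eq_setOf_mapClusterPt]
  have hK : IsCompact (closure (range x)) := hbdd.isCompact_closure
  have hxK : ∀ᶠ k in atTop, x k ∈ closure (range x) :=
    Eventually.of_forall fun k => subset_closure (mem_range_self k)
  have hsmall : Tendsto (fun k => dist (x (k + 1)) (x k)) atTop (𝓝 0) := by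
    simpa [hstep, dist_eq_norm] using tendsto_norm_smul_of_summable_mul_norm_sq ht hT hsum
  have hne := nonempty_setOf_mapClusterPt hK hxK
  exact ⟨hne, isCompact_setOf_mapClusterPt hK hxK, hne,
    isPreconnected_setOf_mapClusterPt_of_tendsto_dist_succ hK hxK hsmall⟩

/-- Theorem 3.3(i): if `x^{k+1} = x^k + t_k d^k`, `∑ t_k ‖d^k‖² < ∞`, `{t_k}` is bounded
above, and `{x^k}` is bounded, then the set of accumulation points of `{x^k}` is
nonempty, compact and connected. -/
theorem stmt3 {n : ℕ} (f : EuclideanSpace ℝ (Fin n) → ℝ) (hf : ContDiff ℝ 1 f)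
    (x d : ℕ → EuclideanSpace ℝ (Fin n)) (t : ℕ → ℝ)
    (ht : ∀ k, 0 ≤ t k)
    (hstep : ∀ k, x (k + 1) = x k + t k • d k)
    (hsum : Summable (fun k => t k * ‖d k‖ ^ 2))
    (T : ℝ) (hT : ∀ k, t k ≤ T)
    (hbdd : Bornology.IsBounded (Set.range x)) :
    ({y : EuclideanSpace ℝ (Fin n) |
        ∃ φ : ℕ → ℕ, StrictMono φ ∧ Tendsto (x ∘ φ) atTop (nhds y)}).Nonempty ∧
    IsCompact {y : EuclideanSpace ℝ (Fin n) |
        ∃ φ : ℕ → ℕ, StrictMono φ ∧ Tendsto (x ∘ φ) atTop (nhds y)} ∧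
    IsConnected {y : EuclideanSpace ℝ (Fin n) |
        ∃ φ : ℕ → ℕ, StrictMono φ ∧ Tendsto (x ∘ φ) atTop (nhds y)} :=
  stmt3_general x d t ht hstep hsum T hT hbdd
end

section
/- Let f: ℝⁿ → ℝ be continuously differentiable and let {x^k} be generated by x^{k+1} = x^k + t_k d^k with t_k ≥ 0. Suppose that inf_k f(x^k) > −∞ and: (a) f satisfies the L-descent condition for some L > 0; (b) {d^k} is gradient associated with {x^k} and ⟨∇f(x^k), d^k⟩ ≤ −κ‖d^k‖² for all k with some κ > 0; (c) ∑_{k=1}^∞ t_k = ∞ and there exist δ > 0 and N ∈ ℕ with t_k ≤ (2κ − δ)/L for all k ≥ N. Then every accumulation point of {x^k} is a stationary point of f. -/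
/-!
Along the iterates from index `N` on, the descent inequality and the step-size bound give the
sufficient decrease `f(x^{k+1}) ≤ f(x^k) - (δ/2) t_k ‖d^k‖²`, so `∑ t_k ‖d^k‖²` converges because
`f(x^k)` is bounded below. If `∇f(x̄) ≠ 0`, the gradient is bounded away from zero on a ball around
`x̄`, and gradient association bounds `‖d^k‖` below by some `ε' > 0` there. On that ball the step lengths
`t_k ‖d^k‖` are then dominated by a summable series, so an iterate close enough to `x̄` with a
small enough tail never leaves the ball; there `t_k ≤ t_k ‖d^k‖² / ε'²`, so `∑ t_k < ∞`, a
contradiction.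
-/

open Filter Topology Finset

def GradientAssociated {E F : Type*} [NormedAddCommGroup E] [NormedAddCommGroup F]
    (d : ℕ → E) (g : ℕ → F) : Prop :=
  ∀ φ : ℕ → ℕ, StrictMono φ → Tendsto (d ∘ φ) atTop (𝓝 0) → Tendsto (g ∘ φ) atTop (𝓝 0)

theorem GradientAssociated.exists_pos_eventually_le_norm {E F : Type*} [NormedAddCommGroup E]
    [NormedAddCommGroup F] {d : ℕ → E} {g : ℕ → F} (hdg : GradientAssociated d g)
    {ε : ℝ} (hε : 0 < ε) : ∃ ε' > 0, ∀ᶠ k in atTop, ε ≤ ‖g k‖ → ε' ≤ ‖d k‖ := by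
  by_contra! h
  have hfreq : ∀ m : ℕ, ∃ᶠ k in atTop, ε ≤ ‖g k‖ ∧ ‖d k‖ < 1 / (m + 1) := by
    intro m
    exact h (1 / (m + 1)) (by positivity)
  obtain ⟨ψ, hψ, hψk⟩ := extraction_forall_of_frequently hfreq
  have hd : Tendsto (d ∘ ψ) atTop (𝓝 0) :=
    tendsto_zero_iff_norm_tendsto_zero.2 <| squeeze_zero (fun _ => norm_nonneg _)
      (fun k => (hψk k).2.le) tendsto_one_div_add_atTop_nhds_zero_nat
  obtain ⟨k, hk⟩ := ((hdg ψ hψ hd).norm.eventually (gt_mem_nhds (by rwa [norm_zero]))).exists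
  exact (hψk k).1.not_gt hk

theorem le_sub_mul_of_descent {E : Type*} [NormedAddCommGroup E] [InnerProductSpace ℝ E]
    {f : E → ℝ} {g x d : E} {t L κ δ : ℝ} (hL : 0 < L) (ht : 0 ≤ t)
    (hdesc : f (x + t • d) ≤ f x + inner ℝ g (t • d) + L / 2 * ‖t • d‖ ^ 2)
    (hsd : inner ℝ g d ≤ -κ * ‖d‖ ^ 2) (htL : t ≤ (2 * κ - δ) / L) :
    f (x + t • d) ≤ f x - δ / 2 * (t * ‖d‖ ^ 2) := by
  rw [real_inner_smul_right, norm_smul, Real.norm_eq_abs, abs_of_nonneg ht] at hdesc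
  have hLt : L * t ≤ 2 * κ - δ := by rwa [le_div_iff₀' hL] at htL
  have hs : 0 ≤ t * ‖d‖ ^ 2 := by positivity
  nlinarith [mul_le_mul_of_nonneg_left hsd ht, mul_le_mul_of_nonneg_right hLt hs]

theorem summable_of_le_sub_mul {u s : ℕ → ℝ} {c : ℝ} {N : ℕ} (hu : BddBelow (Set.range u))
    (hc : 0 < c) (hs : ∀ k, 0 ≤ s k) (hdec : ∀ k ≥ N, u (k + 1) ≤ u k - c * s k) :
    Summable s := by
  obtain ⟨B, hB⟩ := hu
  refine (summable_nat_add_iff N).1 <| summable_of_sum_range_le (c := (u N - B) / c)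
    (fun _ => hs _) fun m => ?_
  have htel : c * ∑ j ∈ range m, s (j + N) ≤ u N - u (m + N) := by
    have := sum_range_sub' (fun j => u (j + N)) m
    rw [zero_add] at this
    rw [← this, mul_sum]
    refine sum_le_sum fun j _ => ?_
    have := hdec (j + N) (Nat.le_add_left _ _)
    rw [Nat.add_right_comm] at this
    linarith
  rw [le_div_iff₀' hc]
  linarith [hB (Set.mem_range_self (m + N))]

theorem eventually_dist_lt_of_summable_steps {X : Type*} [PseudoMetricSpace X] {x : ℕ → X}
    {s : ℕ → ℝ} {x₀ : X} {r : ℝ} (hr : 0 < r) (hs : Summable s) (hs0 : ∀ k, 0 ≤ s k)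
    (hstep : ∀ᶠ k in atTop, dist (x k) x₀ < r → dist (x (k + 1)) (x k) ≤ s k)
    (hx₀ : MapClusterPt x₀ atTop x) : ∀ᶠ k in atTop, dist (x k) x₀ < r := by
  obtain ⟨K, hK⟩ := eventually_atTop.1 hstep
  have htail : ∀ᶠ a in atTop, ∑' k, s (k + a) < r / 2 :=
    (tendsto_order.1 (tendsto_sum_nat_add s)).2 _ (half_pos hr)
  obtain ⟨a, hxa, hsa, haK⟩ := ((hx₀.frequently (Metric.ball_mem_nhds _ (half_pos hr))).and_eventually
    (htail.and (eventually_ge_atTop K))).exists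
  have hpartial : ∀ m, ∑ j ∈ range m, s (j + a) < r / 2 := fun m =>
    (((summable_nat_add_iff a).2 hs).sum_le_tsum _ fun _ _ => hs0 _).trans_lt hsa
  have hball : ∀ m, dist (x (m + a)) (x a) ≤ ∑ j ∈ range m, s (j + a) →
      dist (x (m + a)) x₀ < r := fun m hm => by
    linarith [dist_triangle (x (m + a)) (x a) x₀, hpartial m, Metric.mem_ball.1 hxa]
  have hdist : ∀ m, dist (x (m + a)) (x a) ≤ ∑ j ∈ range m, s (j + a) := by
    intro m
    induction m with
    | zero => simp
    | succ m ih =>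
      have hstep_m := hK (m + a) (by omega) (hball m ih)
      rw [sum_range_succ, Nat.add_right_comm]
      linarith [dist_triangle (x (m + a + 1)) (x (m + a)) (x a)]
  refine eventually_atTop.2 ⟨a, fun k hk => ?_⟩
  obtain ⟨m, rfl⟩ := Nat.exists_eq_add_of_le' hk
  exact hball m (hdist m)

theorem continuous_gradient_of_contDiff {E : Type*} [NormedAddCommGroup E]
    [InnerProductSpace ℝ E] [CompleteSpace E] {f : E → ℝ} (hf : ContDiff ℝ 1 f) :
    Continuous (gradient f) :=
  (InnerProductSpace.toDual ℝ E).symm.continuous.comp (hf.continuous_fderiv one_ne_zero)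

theorem stmt5_general {n : ℕ} (f : EuclideanSpace ℝ (Fin n) → ℝ) (hf : ContDiff ℝ 1 f)
    (x d : ℕ → EuclideanSpace ℝ (Fin n)) (t : ℕ → ℝ)
    (ht : ∀ k, 0 ≤ t k)
    (hstep : ∀ k, x (k + 1) = x k + t k • d k)
    (hinf : BddBelow (Set.range fun k => f (x k)))
    (L : ℝ) (hL : 0 < L)
    (hdesc : ∀ a b : EuclideanSpace ℝ (Fin n),
      f b ≤ f a + (inner ℝ (gradient f a) (b - a) : ℝ) + L / 2 * ‖b - a‖ ^ 2)
    (hga : ∀ φ : ℕ → ℕ, StrictMono φ → Tendsto (d ∘ φ) atTop (nhds 0) →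
      Tendsto (fun k => gradient f (x (φ k))) atTop (nhds 0))
    (κ : ℝ)
    (hsd : ∀ k, (inner ℝ (gradient f (x k)) (d k) : ℝ) ≤ -κ * ‖d k‖ ^ 2)
    (hdiv : Tendsto (fun N => ∑ k ∈ Finset.range N, t k) atTop atTop)
    (δ : ℝ) (hδ : 0 < δ) (N : ℕ) (htk : ∀ k ≥ N, t k ≤ (2 * κ - δ) / L)
    (xbar : EuclideanSpace ℝ (Fin n))
    (hacc : ∃ φ : ℕ → ℕ, StrictMono φ ∧ Tendsto (x ∘ φ) atTop (nhds xbar)) :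
    gradient f xbar = 0 := by
  by_contra hne
  obtain ⟨φ, hφ, hxφ⟩ := hacc
  have hincr : ∀ k, x (k + 1) - x k = t k • d k := fun k => by rw [hstep, add_sub_cancel_left]
  have hdec : ∀ k ≥ N, f (x (k + 1)) ≤ f (x k) - δ / 2 * (t k * ‖d k‖ ^ 2) := fun k hk => by
    have hdesc_k := hdesc (x k) (x (k + 1))
    rw [hincr, hstep] at hdesc_k
    rw [hstep]
    exact le_sub_mul_of_descent hL (ht k) hdesc_k (hsd k) (htk k hk)
  have hsum : Summable fun k => t k * ‖d k‖ ^ 2 :=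
    summable_of_le_sub_mul hinf (half_pos hδ) (fun k => by have := ht k; positivity) hdec
  obtain ⟨r, hr, hgrad⟩ := Metric.continuousAt_iff.1
    (continuous_gradient_of_contDiff hf).continuousAt _ (half_pos (norm_pos_iff.2 hne))
  obtain ⟨ε', hε', hd⟩ := GradientAssociated.exists_pos_eventually_le_norm
    (g := fun k => gradient f (x k)) hga (half_pos (norm_pos_iff.2 hne))
  have hdball : ∀ᶠ k in atTop, dist (x k) xbar < r → ε' ≤ ‖d k‖ := hd.mono fun k hk hxk => by
    have hclose := hgrad hxk
    rw [dist_eq_norm'] at hclose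
    exact hk (by linarith [norm_sub_norm_le (gradient f xbar) (gradient f (x k))])
  have htrap := eventually_dist_lt_of_summable_steps hr (hsum.div_const ε')
    (fun k => by have := ht k; positivity)
    (hdball.mono fun k hk hxk => by
      rw [dist_eq_norm, hincr, norm_smul, Real.norm_of_nonneg (ht k), le_div_iff₀ hε', sq,
        ← mul_assoc]
      exact mul_le_mul_of_nonneg_left (hk hxk) (mul_nonneg (ht k) (norm_nonneg _)))
    (hxφ.mapClusterPt.of_comp hφ.tendsto_atTop)
  have ht_sum : Summable t := Summable.of_norm_bounded_eventually_nat (hsum.div_const (ε' ^ 2))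
    ((htrap.and hdball).mono fun k ⟨hxk, hk⟩ => by
      rw [Real.norm_of_nonneg (ht k), le_div_iff₀ (by positivity)]
      exact mul_le_mul_of_nonneg_left (pow_le_pow_left₀ hε'.le (hk hxk) 2) (ht k))
  exact not_tendsto_atTop_of_tendsto_nhds ht_sum.hasSum.tendsto_sum_nat hdiv

/-- Corollary 3.4 (main part): under the L-descent condition, sufficient descent and
gradient associated directions, non-summable stepsizes eventually bounded by
`(2κ - δ)/L`, and `inf f(x^k) > -∞`, every accumulation point of `{x^k}` is stationary. -/
theorem stmt5 {n : ℕ} (f : EuclideanSpace ℝ (Fin n) → ℝ) (hf : ContDiff ℝ 1 f)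
    (x d : ℕ → EuclideanSpace ℝ (Fin n)) (t : ℕ → ℝ)
    (ht : ∀ k, 0 ≤ t k)
    (hstep : ∀ k, x (k + 1) = x k + t k • d k)
    (hinf : BddBelow (Set.range fun k => f (x k)))
    (L : ℝ) (hL : 0 < L)
    (hdesc : ∀ a b : EuclideanSpace ℝ (Fin n),
      f b ≤ f a + (inner ℝ (gradient f a) (b - a) : ℝ) + L / 2 * ‖b - a‖ ^ 2)
    (hga : ∀ φ : ℕ → ℕ, StrictMono φ → Tendsto (d ∘ φ) atTop (nhds 0) →
      Tendsto (fun k => gradient f (x (φ k))) atTop (nhds 0))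
    (κ : ℝ) (hκ : 0 < κ)
    (hsd : ∀ k, (inner ℝ (gradient f (x k)) (d k) : ℝ) ≤ -κ * ‖d k‖ ^ 2)
    (hdiv : Tendsto (fun N => ∑ k ∈ Finset.range N, t k) atTop atTop)
    (δ : ℝ) (hδ : 0 < δ) (N : ℕ) (htk : ∀ k ≥ N, t k ≤ (2 * κ - δ) / L)
    (xbar : EuclideanSpace ℝ (Fin n))
    (hacc : ∃ φ : ℕ → ℕ, StrictMono φ ∧ Tendsto (x ∘ φ) atTop (nhds xbar)) :
    gradient f xbar = 0 :=
  stmt5_general f hf x d t ht hstep hinf L hL hdesc hga κ hsd hdiv δ hδ N htk xbar hacc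
end

section
/- Let f: ℝⁿ → ℝ be continuously differentiable and let {x^k} be generated by x^{k+1} = x^k + t_k d^k with t_k ≥ 0. Suppose that inf_k f(x^k) > −∞, that f satisfies the L-descent condition for some L > 0, that {d^k} is gradient associated with {x^k} and satisfies ⟨∇f(x^k), d^k⟩ ≤ −κ‖d^k‖² for all k with some κ > 0, that ∑_{k=1}^∞ t_k = ∞, that there exist δ > 0 and N ∈ ℕ with t_k ≤ (2κ − δ)/L for all k ≥ N, and that {t_k} is bounded away from 0 (there is t̄ > 0 with t_k ≥ t̄ for all k). Then ∇f(x^k) → 0 as k → ∞. -/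
/-!
With step sizes in `[tlow, (2κ - δ)/L]`, the `L`-descent inequality and the angle condition
`⟪∇f(xᵏ), dᵏ⟫ ≤ -κ‖dᵏ‖²` give the sufficient decrease `f(xᵏ⁺¹) ≤ f(xᵏ) - tlow (δ/2) ‖dᵏ‖²`
for large `k`. Since `f(xᵏ)` is bounded below, the decreases tend to `0`, so `dᵏ → 0`, and
gradient association turns this into `∇f(xᵏ) → 0`.
-/

open Filter Topology

theorem tendsto_zero_of_le_sub_succ {a u : ℕ → ℝ} {N : ℕ} (ha : ∀ k, 0 ≤ a k)
    (hu : BddBelow (Set.range u)) (h : ∀ k ≥ N, a k ≤ u k - u (k + 1)) :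
    Tendsto a atTop (𝓝 0) := by
  set v : ℕ → ℝ := fun k => u (k + N)
  have hv_anti : Antitone v := antitone_nat_of_succ_le fun k => by
    have := h (k + N) (Nat.le_add_left N k)
    have := ha (k + N)
    simp only [v, Nat.add_right_comm k 1 N]
    linarith
  have hv_bdd : BddBelow (Set.range v) :=
    hu.mono (Set.range_comp_subset_range (· + N) u)
  have hv := tendsto_atTop_ciInf hv_anti hv_bdd
  have hdiff : Tendsto (fun k => v k - v (k + 1)) atTop (𝓝 0) := by
    simpa using hv.sub (hv.comp (tendsto_add_atTop_nat 1))
  refine (tendsto_add_atTop_iff_nat N).mp ?_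
  refine tendsto_of_tendsto_of_tendsto_of_le_of_le tendsto_const_nhds hdiff
    (fun k => ha (k + N)) fun k => ?_
  simpa only [v, Nat.add_right_comm k 1 N] using h (k + N) (Nat.le_add_left N k)

section InnerProductSpace

variable {E : Type*} [NormedAddCommGroup E] [InnerProductSpace ℝ E]

theorem le_sub_of_descent_of_inner_le {f : E → ℝ} {g a d : E} {L κ t : ℝ}
    (hdesc : ∀ b, f b ≤ f a + inner ℝ g (b - a) + L / 2 * ‖b - a‖ ^ 2)
    (hsd : inner ℝ g d ≤ -κ * ‖d‖ ^ 2) (ht : 0 ≤ t) :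
    f (a + t • d) ≤ f a - t * (κ - L / 2 * t) * ‖d‖ ^ 2 := by
  have hb := hdesc (a + t • d)
  rw [add_sub_cancel_left, real_inner_smul_right, norm_smul, mul_pow, Real.norm_eq_abs,
    sq_abs] at hb
  nlinarith [mul_le_mul_of_nonneg_left hsd ht]

end InnerProductSpace

theorem mul_le_mul_sub_of_le_div {L κ δ s t : ℝ} (hL : 0 < L) (hδ : 0 ≤ δ) (hs : 0 ≤ s)
    (hst : s ≤ t) (ht : t ≤ (2 * κ - δ) / L) :
    s * (δ / 2) ≤ t * (κ - L / 2 * t) := by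
  have hLt : L * t ≤ 2 * κ - δ := (le_div_iff₀' hL).mp ht
  exact mul_le_mul hst (by linarith) (by positivity) (hs.trans hst)

theorem stmt6_general {n : ℕ} (f : EuclideanSpace ℝ (Fin n) → ℝ)
    (x d : ℕ → EuclideanSpace ℝ (Fin n)) (t : ℕ → ℝ)
    (hstep : ∀ k, x (k + 1) = x k + t k • d k)
    (hinf : BddBelow (Set.range fun k => f (x k)))
    (L : ℝ) (hL : 0 < L)
    (hdesc : ∀ a b : EuclideanSpace ℝ (Fin n),
      f b ≤ f a + (inner ℝ (gradient f a) (b - a) : ℝ) + L / 2 * ‖b - a‖ ^ 2)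
    (hga : ∀ φ : ℕ → ℕ, StrictMono φ → Tendsto (d ∘ φ) atTop (nhds 0) →
      Tendsto (fun k => gradient f (x (φ k))) atTop (nhds 0))
    (κ : ℝ)
    (hsd : ∀ k, (inner ℝ (gradient f (x k)) (d k) : ℝ) ≤ -κ * ‖d k‖ ^ 2)
    (δ : ℝ) (hδ : 0 < δ) (N : ℕ) (htk : ∀ k ≥ N, t k ≤ (2 * κ - δ) / L)
    (tlow : ℝ) (htlow : 0 < tlow) (hlow : ∀ k, tlow ≤ t k) :
    Tendsto (fun k => gradient f (x k)) atTop (nhds 0) := by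
  have hc : 0 < tlow * (δ / 2) := by positivity
  have hdecrease : ∀ k ≥ N, tlow * (δ / 2) * ‖d k‖ ^ 2 ≤ f (x k) - f (x (k + 1)) := fun k hk => by
    have hstep_le := le_sub_of_descent_of_inner_le (hdesc (x k)) (hsd k)
      (htlow.le.trans (hlow k))
    have hcoef := mul_le_mul_sub_of_le_div hL hδ.le htlow.le (hlow k) (htk k hk)
    rw [← hstep k] at hstep_le
    linarith [mul_le_mul_of_nonneg_right hcoef (sq_nonneg ‖d k‖)]
  have hsq : Tendsto (fun k => ‖d k‖ ^ 2) atTop (𝓝 0) := by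
    simpa only [inv_mul_cancel_left₀ hc.ne', mul_zero] using
      (tendsto_zero_of_le_sub_succ (fun k => by positivity) hinf hdecrease).const_mul (tlow * (δ / 2))⁻¹
  have hnorm : Tendsto (fun k => ‖d k‖) atTop (𝓝 0) := by
    simpa [Real.sqrt_sq (norm_nonneg _)] using hsq.sqrt
  exact hga id strictMono_id (tendsto_zero_iff_norm_tendsto_zero.mpr hnorm)

/-- Corollary 3.4 (last part): under the same assumptions, if additionally the stepsizes
are bounded away from `0`, then `∇f(x^k) → 0` as `k → ∞`. -/
theorem stmt6 {n : ℕ} (f : EuclideanSpace ℝ (Fin n) → ℝ) (hf : ContDiff ℝ 1 f)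
    (x d : ℕ → EuclideanSpace ℝ (Fin n)) (t : ℕ → ℝ)
    (ht : ∀ k, 0 ≤ t k)
    (hstep : ∀ k, x (k + 1) = x k + t k • d k)
    (hinf : BddBelow (Set.range fun k => f (x k)))
    (L : ℝ) (hL : 0 < L)
    (hdesc : ∀ a b : EuclideanSpace ℝ (Fin n),
      f b ≤ f a + (inner ℝ (gradient f a) (b - a) : ℝ) + L / 2 * ‖b - a‖ ^ 2)
    (hga : ∀ φ : ℕ → ℕ, StrictMono φ → Tendsto (d ∘ φ) atTop (nhds 0) →
      Tendsto (fun k => gradient f (x (φ k))) atTop (nhds 0))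
    (κ : ℝ) (hκ : 0 < κ)
    (hsd : ∀ k, (inner ℝ (gradient f (x k)) (d k) : ℝ) ≤ -κ * ‖d k‖ ^ 2)
    (hdiv : Tendsto (fun N => ∑ k ∈ Finset.range N, t k) atTop atTop)
    (δ : ℝ) (hδ : 0 < δ) (N : ℕ) (htk : ∀ k ≥ N, t k ≤ (2 * κ - δ) / L)
    (tlow : ℝ) (htlow : 0 < tlow) (hlow : ∀ k, tlow ≤ t k) :
    Tendsto (fun k => gradient f (x k)) atTop (nhds 0) :=
  stmt6_general f x d t hstep hinf L hL hdesc hga κ hsd δ hδ N htk tlow htlow hlow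
end

section
/- Let {s_k} be a nonnegative real sequence with s_k → 0, let α > 1 and β > 0, and suppose that s_k^α ≤ β(s_k − s_{k+1}) for all sufficiently large k. Then there exists a constant ϱ > 0 such that s_k ≤ ϱ k^{−1/(α−1)} for all sufficiently large k. -/
open Filter

/-!
Once `s` vanishes it stays zero, so assume `s k > 0` for large `k`. Tangent-line convexity of
`t ↦ t ^ (1 - α)` at `s k`, together with the recursion, gives
`s (k + 1) ^ (1 - α) ≥ s k ^ (1 - α) + (α - 1) / β`. Hence `s k ^ (1 - α)` grows at least linearly
in `k`, and raising to the power `-1 / (α - 1)` yields the decay `s k = O(k ^ (-1 / (α - 1)))`.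
-/

namespace Real

theorem one_add_mul_one_sub_le_rpow_neg {x q : ℝ} (hx : 0 < x) (hq : 0 ≤ q) :
    1 + q * (1 - x) ≤ x ^ (-q) :=
  calc 1 + q * (1 - x) ≤ 1 - q * log x := by nlinarith [log_le_sub_one_of_pos hx]
    _ ≤ exp (log x * -q) := by linarith [add_one_le_exp (log x * -q)]
    _ = x ^ (-q) := (rpow_def_of_pos hx _).symm

theorem rpow_one_sub_add_le {a b α : ℝ} (ha : 0 < a) (hb : 0 < b) (hα : 1 ≤ α) :
    a ^ (1 - α) + (α - 1) * (a - b) / a ^ α ≤ b ^ (1 - α) := by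
  have hbern := one_add_mul_one_sub_le_rpow_neg (div_pos hb ha) (sub_nonneg.2 hα)
  rw [div_rpow hb.le ha.le, neg_sub] at hbern
  have haα : 0 < a ^ α := rpow_pos_of_pos ha α
  have hpow : a ^ (1 - α) = a / a ^ α := by rw [rpow_sub ha, rpow_one]
  rw [hpow, le_div_iff₀ (div_pos ha haα)] at hbern
  rw [hpow]
  calc a / a ^ α + (α - 1) * (a - b) / a ^ α = (1 + (α - 1) * (1 - b / a)) * (a / a ^ α) := by
        field_simp
    _ ≤ b ^ (1 - α) := hbern

theorem le_rpow_neg_inv_sub_one {x y α : ℝ} (hx : 0 < x) (hy : 0 < y) (hα : 1 < α)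
    (h : y ≤ x ^ (1 - α)) : x ≤ y ^ (-(1 / (α - 1))) := by
  rw [show -(1 / (α - 1)) = (1 - α)⁻¹ by rw [← div_neg, neg_sub, one_div]]
  exact (le_rpow_inv_iff_of_neg hx hy (by linarith)).2 h

end Real

theorem le_of_rpow_le_mul_sub {a b α β : ℝ} (ha : 0 ≤ a) (hβ : 0 < β)
    (h : a ^ α ≤ β * (a - b)) : b ≤ a := by
  nlinarith [Real.rpow_nonneg ha α]

theorem rpow_one_sub_add_div_le_of_rpow_le_mul_sub {a b α β : ℝ} (ha : 0 < a) (hb : 0 < b)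
    (hα : 1 ≤ α) (hβ : 0 < β) (h : a ^ α ≤ β * (a - b)) :
    a ^ (1 - α) + (α - 1) / β ≤ b ^ (1 - α) := by
  have hdiv : (α - 1) / β ≤ (α - 1) * (a - b) / a ^ α := by
    rw [div_le_div_iff₀ hβ (Real.rpow_pos_of_pos ha α)]
    nlinarith
  linarith [Real.rpow_one_sub_add_le ha hb hα]

section Sequence

variable {s : ℕ → ℝ} {N : ℕ}

theorem eq_zero_of_antitone_from_of_eq_zero (hs : ∀ k, 0 ≤ s k)
    (hanti : ∀ k ≥ N, s (k + 1) ≤ s k) {M : ℕ} (hM : N ≤ M) (h0 : s M = 0) :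
    ∀ k ≥ M, s k = 0 := by
  intro k hk
  induction k, hk using Nat.le_induction with
  | base => exact h0
  | succ k hk ih => exact le_antisymm (ih ▸ hanti k (hM.trans hk)) (hs (k + 1))

theorem add_mul_sub_le_of_add_le_succ {c : ℝ} (h : ∀ k ≥ N, s k + c ≤ s (k + 1)) :
    ∀ k ≥ N, s N + c * (k - N) ≤ s k := by
  intro k hk
  induction k, hk using Nat.le_induction with
  | base => simp
  | succ k hk ih =>
    push_cast
    linarith [h k hk]

theorem exists_eventually_le_mul_rpow_of_mul_sub_le_rpow_one_sub {α c : ℝ} (hα : 1 < α)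
    (hc : 0 < c) (hpos : ∀ k ≥ N, 0 < s k) (h : ∀ k ≥ N, c * (k - N) ≤ s k ^ (1 - α)) :
    ∃ ϱ > (0 : ℝ), ∀ᶠ k in atTop, s k ≤ ϱ * (k : ℝ) ^ (-(1 / (α - 1))) := by
  refine ⟨(c / 2) ^ (-(1 / (α - 1))), by positivity, eventually_atTop.2 ⟨max (2 * N) 1, ?_⟩⟩
  intro k hk
  have hk2N : (2 * N : ℝ) ≤ k := by exact_mod_cast le_of_max_le_left hk
  have hk1 : (1 : ℝ) ≤ k := by exact_mod_cast le_of_max_le_right hk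
  have hkN : N ≤ k := by omega
  rw [← Real.mul_rpow (by positivity) (by positivity)]
  refine Real.le_rpow_neg_inv_sub_one (hpos k hkN) (by positivity) hα ?_
  nlinarith [h k hkN]

end Sequence

theorem stmt8_general (s : ℕ → ℝ) (hs : ∀ k, 0 ≤ s k)
    (α β : ℝ) (hα : 1 < α) (hβ : 0 < β)
    (hrec : ∀ᶠ k in atTop, s k ^ α ≤ β * (s k - s (k + 1))) :
    ∃ ϱ > (0 : ℝ), ∀ᶠ k in atTop, s k ≤ ϱ * (k : ℝ) ^ (-(1 / (α - 1))) := by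
  obtain ⟨N, hN⟩ := eventually_atTop.1 hrec
  have hanti : ∀ k ≥ N, s (k + 1) ≤ s k := fun k hk => le_of_rpow_le_mul_sub (hs k) hβ (hN k hk)
  by_cases hzero : ∃ M ≥ N, s M = 0
  · obtain ⟨M, hM, hM0⟩ := hzero
    refine ⟨1, one_pos, eventually_atTop.2 ⟨M, fun k hk => ?_⟩⟩
    rw [eq_zero_of_antitone_from_of_eq_zero hs hanti hM hM0 k hk, one_mul]
    positivity
  · push Not at hzero
    have hpos : ∀ k ≥ N, 0 < s k := fun k hk => (hs k).lt_of_ne (hzero k hk).symm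
    have hgrowth := add_mul_sub_le_of_add_le_succ (s := fun k => s k ^ (1 - α)) fun k hk =>
      rpow_one_sub_add_div_le_of_rpow_le_mul_sub (hpos k hk) (hpos (k + 1) (by omega)) hα.le hβ
        (hN k hk)
    refine exists_eventually_le_mul_rpow_of_mul_sub_le_rpow_one_sub hα
      (div_pos (sub_pos.2 hα) hβ) hpos fun k hk => ?_
    linarith [hgrowth k hk, Real.rpow_nonneg (hs N) (1 - α)]

/-- Lemma 3.6(ii): if `s_k ≥ 0`, `s_k → 0`, `α > 1`, `β > 0`, and
`s_k^α ≤ β (s_k - s_{k+1})` for all large `k`, then there is `ϱ > 0` with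
`s_k ≤ ϱ k^{-1/(α-1)}` for all large `k`. -/
theorem stmt8 (s : ℕ → ℝ) (hs : ∀ k, 0 ≤ s k)
    (hlim : Tendsto s atTop (nhds 0))
    (α β : ℝ) (hα : 1 < α) (hβ : 0 < β)
    (hrec : ∀ᶠ k in atTop, s k ^ α ≤ β * (s k - s (k + 1))) :
    ∃ ϱ > (0 : ℝ), ∀ᶠ k in atTop, s k ≤ ϱ * (k : ℝ) ^ (-(1 / (α - 1))) :=
  stmt8_general s hs α β hα hβ hrec
end

section
/- Let f: ℝⁿ → ℝ be continuously differentiable, let {x^k} ⊂ ℝⁿ and {t_k} ⊂ (0,∞) with {t_k} bounded away from 0, let β > 0 and c > 0, and assume x^{k+1} ≠ x^k for all k and, for all sufficiently large k, f(x^k) − f(x^{k+1}) ≥ (β/t_k)‖x^{k+1} − x^k‖² and ‖∇f(x^k)‖ ≤ (c/t_k)‖x^{k+1} − x^k‖. Suppose x̄ is an accumulation point of {x^k} and f satisfies the KL property at x̄ with ψ(t) = M t^q for some M > 0 and q ∈ (0, 1/2]. Then {x^k} converges linearly to x̄, i.e., there exist C > 0 and ρ ∈ (0,1) such that ‖x^k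 − x̄‖ ≤ C ρ^k for all sufficiently large k. -/
/-!
Along the iterates the values `e_k = f(x^k) - f(x̄)` decrease to `0`. Combining the KL
inequality with the two descent conditions gives, near `x̄`, both `e_{k+1} ≤ ρ e_k` and
`‖x^{k+1} - x^k‖ ≤ K √e_k`; here `q ≤ 1/2` is what gives `e_k^{2q} ≥ e_k` once `e_k ≤ 1`.
Once an iterate is close enough to `x̄` with `e_k` small, the step lengths are dominated by a
convergent geometric series, so the iterates never leave the KL neighbourhood, and the tail
of that series bounds the distance to the accumulation point `x̄`.
-/

open Filter Topology Finset

theorem le_rpow_sq_of_le_one {e q : ℝ} (he0 : 0 < e) (he1 : e ≤ 1) (hq : q ≤ 1 / 2) :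
    e ≤ (e ^ q) ^ 2 := by
  rw [← Real.rpow_natCast, ← Real.rpow_mul he0.le]
  simpa using Real.rpow_le_rpow_of_exponent_ge he0 he1 (by push_cast; linarith : q * (2 : ℕ) ≤ 1)

section DescentStep

variable {β c M q t e e' d : ℝ}

theorem kl_sufficient_decrease (hβ : 0 < β) (hM : 0 < M) (ht : 0 < t) (he0 : 0 < e)
    (he1 : e ≤ 1) (hq : q ≤ 1 / 2) (hdec : β / t * d ^ 2 ≤ e - e')
    (hgrad : M * e ^ q ≤ c / t * d) :
    β * M ^ 2 * t * e ≤ c ^ 2 * (e - e') :=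
  calc β * M ^ 2 * t * e ≤ β * M ^ 2 * t * (e ^ q) ^ 2 := by
        gcongr; exact le_rpow_sq_of_le_one he0 he1 hq
    _ = β * t * (M * e ^ q) ^ 2 := by ring
    _ ≤ β * t * (c / t * d) ^ 2 := by gcongr
    _ = c ^ 2 * (β / t * d ^ 2) := by field_simp
    _ ≤ c ^ 2 * (e - e') := by gcongr

theorem kl_contraction {tlow : ℝ} (hβ : 0 < β) (hc : 0 < c) (hM : 0 < M) (ht : 0 < t)
    (htlow : tlow ≤ t) (he0 : 0 < e) (he1 : e ≤ 1) (hq : q ≤ 1 / 2)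
    (hdec : β / t * d ^ 2 ≤ e - e') (hgrad : M * e ^ q ≤ c / t * d) :
    e' ≤ (1 - β * M ^ 2 * tlow / c ^ 2) * e := by
  have hkl := kl_sufficient_decrease hβ hM ht he0 he1 hq hdec hgrad
  have htlow' : β * M ^ 2 * tlow * e ≤ β * M ^ 2 * t * e := by gcongr
  have hγ : β * M ^ 2 * tlow / c ^ 2 * e ≤ e - e' := by
    rw [div_mul_eq_mul_div, div_le_iff₀ (by positivity)]
    linarith
  linarith

theorem kl_step_le (hβ : 0 < β) (hc : 0 < c) (hM : 0 < M) (ht : 0 < t)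
    (he0 : 0 < e) (he1 : e ≤ 1) (hq : q ≤ 1 / 2) (he' : 0 ≤ e')
    (hdec : β / t * d ^ 2 ≤ e - e') (hgrad : M * e ^ q ≤ c / t * d) :
    d ≤ c / (β * M) * √e := by
  have hkl := kl_sufficient_decrease hβ hM ht he0 he1 hq hdec hgrad
  -- the KL inequality caps the stepsize: `β M² t ≤ c²`
  have htcap : β * M ^ 2 * t ≤ c ^ 2 := by
    refine le_of_mul_le_mul_right (hkl.trans ?_) he0
    gcongr
    linarith
  have hd : β * d ^ 2 ≤ t * e := by
    rw [div_mul_eq_mul_div, div_le_iff₀ ht] at hdec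
    nlinarith
  have hd2 : d ^ 2 ≤ (c / (β * M)) ^ 2 * e := by
    rw [div_pow, div_mul_eq_mul_div, le_div_iff₀ (by positivity)]
    nlinarith [mul_le_mul_of_nonneg_right htcap he0.le]
  calc d ≤ |d| := le_abs_self d
    _ ≤ √((c / (β * M)) ^ 2 * e) := Real.abs_le_sqrt hd2
    _ = c / (β * M) * √e := by
      rw [Real.sqrt_mul (sq_nonneg _), Real.sqrt_sq (by positivity)]

theorem kl_sqrt_step {tlow ρ v v' vbar : ℝ} (hβ : 0 < β) (hc : 0 < c) (hM : 0 < M)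
    (ht : 0 < t) (htlow : tlow ≤ t) (hρ : 1 - β * M ^ 2 * tlow / c ^ 2 ≤ ρ) (hq : q ≤ 1 / 2)
    (hv : vbar < v) (hv' : vbar ≤ v') (hv1 : v - vbar ≤ 1) (hdec : β / t * d ^ 2 ≤ v - v')
    (hgrad : M * (v - vbar) ^ q ≤ c / t * d) :
    c / (β * M) * √(v' - vbar) ≤ √ρ * (c / (β * M) * √(v - vbar)) ∧
      d ≤ c / (β * M) * √(v - vbar) := by
  have he0 : 0 < v - vbar := sub_pos.2 hv
  have hdec' : β / t * d ^ 2 ≤ (v - vbar) - (v' - vbar) := by linarith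
  refine ⟨?_, kl_step_le hβ hc hM ht he0 hv1 hq (sub_nonneg.2 hv') hdec' hgrad⟩
  have hcontr := kl_contraction hβ hc hM ht htlow he0 hv1 hq hdec' hgrad
  calc c / (β * M) * √(v' - vbar) ≤ c / (β * M) * √(ρ * (v - vbar)) := by
        gcongr; exact hcontr.trans (by gcongr)
    _ = √ρ * (c / (β * M) * √(v - vbar)) := by rw [Real.sqrt_mul' _ he0.le]; ring

end DescentStep

section SubsequenceLimit

variable {α : Type*} [LinearOrder α] [TopologicalSpace α] [OrderTopology α]
  {v : ℕ → α} {N : ℕ} {φ : ℕ → ℕ} {L : α}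

theorem lt_of_succ_lt_of_tendsto_comp (hv : ∀ k ≥ N, v (k + 1) < v k) (hφ : StrictMono φ)
    (hL : Tendsto (v ∘ φ) atTop (𝓝 L)) {k : ℕ} (hk : N ≤ k) : L < v k := by
  have hanti := antitoneOn_nat_Ici_of_succ_le fun n hn => (hv n hn).le
  refine (le_of_tendsto hL ?_).trans_lt (hv k hk)
  filter_upwards [hφ.tendsto_atTop.eventually_ge_atTop (k + 1)] with j hj
  exact hanti (show N ≤ k + 1 by omega) (show N ≤ φ j by omega) hj

theorem tendsto_of_succ_lt_of_tendsto_comp (hv : ∀ k ≥ N, v (k + 1) < v k)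
    (hφ : StrictMono φ) (hL : Tendsto (v ∘ φ) atTop (𝓝 L)) : Tendsto v atTop (𝓝 L) := by
  have hanti := antitoneOn_nat_Ici_of_succ_le fun n hn => (hv n hn).le
  refine tendsto_order.2 ⟨fun b hb => ?_, fun b hb => ?_⟩
  · filter_upwards [eventually_ge_atTop N] with k hk
    exact hb.trans (lt_of_succ_lt_of_tendsto_comp hv hφ hL hk)
  · obtain ⟨j, hjN, hjb⟩ :=
      ((hφ.tendsto_atTop.eventually_ge_atTop N).and (hL.eventually_lt_const hb)).exists
    filter_upwards [eventually_ge_atTop (φ j)] with k hk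
    exact (hanti hjN (show N ≤ k by omega) hk).trans_lt hjb

end SubsequenceLimit

section GeometricSteps

variable {X : Type*} [PseudoMetricSpace X] {x : ℕ → X} {a : ℕ → ℝ} {y : X} {ε s : ℝ}

theorem dist_succ_le_geometric_of_contraction (hs0 : 0 ≤ s) (hs1 : s < 1) (ha0 : 0 ≤ a 0)
    (hstep : ∀ k, dist (x k) y < ε → a (k + 1) ≤ s * a k ∧ dist (x k) (x (k + 1)) ≤ a k)
    (hstart : dist (x 0) y + a 0 / (1 - s) < ε) (k : ℕ) :
    dist (x k) (x (k + 1)) ≤ a 0 * s ^ k := by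
  have hgeom (k : ℕ) : a 0 * ∑ i ∈ range k, s ^ i ≤ a 0 / (1 - s) := by
    rw [div_eq_mul_one_div]
    refine mul_le_mul_of_nonneg_left ?_ ha0
    rw [range_eq_Ico]
    simpa using geom_sum_Ico_le_of_lt_one (m := 0) (n := k) hs0 hs1
  have hinv (k : ℕ) :
      a k ≤ a 0 * s ^ k ∧ dist (x k) y ≤ dist (x 0) y + a 0 * ∑ i ∈ range k, s ^ i := by
    induction k with
    | zero => simp
    | succ k ih =>
      obtain ⟨hak, hdk⟩ := ih
      obtain ⟨hcontr, hlen⟩ := hstep k (by linarith [hgeom k])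
      constructor
      · calc a (k + 1) ≤ s * a k := hcontr
          _ ≤ s * (a 0 * s ^ k) := by gcongr
          _ = a 0 * s ^ (k + 1) := by ring
      · calc dist (x (k + 1)) y ≤ dist (x k) (x (k + 1)) + dist (x k) y := dist_triangle_left ..
          _ ≤ a 0 * s ^ k + (dist (x 0) y + a 0 * ∑ i ∈ range k, s ^ i) := by
            gcongr; exact hlen.trans hak
          _ = dist (x 0) y + a 0 * ∑ i ∈ range (k + 1), s ^ i := by
            rw [sum_range_succ]; ring
  obtain ⟨hak, hdk⟩ := hinv k
  exact (hstep k (by linarith [hgeom k])).2.trans hak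

theorem eventually_dist_le_geometric_of_tendsto_comp {φ : ℕ → ℕ} {C : ℝ} (hC : 0 ≤ C)
    (hs0 : 0 ≤ s) (hs1 : s < 1) (hx : ∀ᶠ n in atTop, dist (x n) (x (n + 1)) ≤ C * s ^ n)
    (hφ : StrictMono φ) (hy : Tendsto (x ∘ φ) atTop (𝓝 y)) :
    ∀ᶠ n in atTop, dist (x n) y ≤ C / (1 - s) * s ^ n := by
  obtain ⟨N, hN⟩ := eventually_atTop.1 hx
  filter_upwards [eventually_ge_atTop N] with n hn
  have hfar (p : ℕ) (hp : n ≤ p) : dist (x n) (x p) ≤ C / (1 - s) * s ^ n :=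
    calc dist (x n) (x p) ≤ ∑ i ∈ Ico n p, C * s ^ i :=
          dist_le_Ico_sum_of_dist_le hp fun hk _ => hN _ (hn.trans hk)
      _ = C * ∑ i ∈ Ico n p, s ^ i := (mul_sum ..).symm
      _ ≤ C * (s ^ n / (1 - s)) := by gcongr; exact geom_sum_Ico_le_of_lt_one hs0 hs1
      _ = C / (1 - s) * s ^ n := by ring
  refine le_of_tendsto (tendsto_const_nhds.dist hy) ?_
  filter_upwards [hφ.tendsto_atTop.eventually_ge_atTop n] with j hj using hfar _ hj

theorem exists_dist_le_geometric_of_contraction {φ : ℕ → ℕ} (hε : 0 < ε) (hs0 : 0 < s)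
    (hs1 : s < 1) (ha : ∀ k, 0 ≤ a k) (ha_lim : Tendsto a atTop (𝓝 0)) (hφ : StrictMono φ)
    (hy : Tendsto (x ∘ φ) atTop (𝓝 y))
    (hstep : ∀ᶠ k in atTop,
      dist (x k) y < ε → a (k + 1) ≤ s * a k ∧ dist (x k) (x (k + 1)) ≤ a k) :
    ∃ C > 0, ∀ᶠ k in atTop, dist (x k) y ≤ C * s ^ k := by
  obtain ⟨N, hN⟩ := eventually_atTop.1 hstep
  have hstart : Tendsto (fun j => dist (x (φ j)) y + a (φ j) / (1 - s)) atTop (𝓝 0) := by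
    simpa using (tendsto_iff_dist_tendsto_zero.1 hy).add
      ((ha_lim.comp hφ.tendsto_atTop).div_const (1 - s))
  obtain ⟨j, hjN, hj⟩ :=
    ((hφ.tendsto_atTop.eventually_ge_atTop N).and (hstart.eventually_lt_const hε)).exists
  set m := φ j
  have hsteps : ∀ i, dist (x (m + i)) (x (m + i + 1)) ≤ a m * s ^ i :=
    dist_succ_le_geometric_of_contraction (x := fun i => x (m + i)) (a := fun i => a (m + i))
      hs0.le hs1 (ha _) (fun i => hN _ (by omega)) (by simpa using hj)
  have hgeom : ∀ᶠ k in atTop, dist (x k) (x (k + 1)) ≤ a m / s ^ m * s ^ k := by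
    filter_upwards [eventually_ge_atTop m] with k hk
    obtain ⟨i, rfl⟩ := Nat.exists_eq_add_of_le hk
    calc dist (x (m + i)) (x (m + i + 1)) ≤ a m * s ^ i := hsteps i
      _ = a m / s ^ m * s ^ (m + i) := by rw [pow_add]; field_simp
  have hC : 0 ≤ a m / s ^ m := div_nonneg (ha m) (by positivity)
  have hC' : 0 ≤ a m / s ^ m / (1 - s) := div_nonneg hC (by linarith)
  refine ⟨a m / s ^ m / (1 - s) + 1, by linarith, ?_⟩
  filter_upwards [eventually_dist_le_geometric_of_tendsto_comp hC hs0.le hs1 hgeom hφ hy]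
    with k hk
  exact hk.trans (by gcongr; linarith)

end GeometricSteps

theorem stmt9_general {n : ℕ} (f : EuclideanSpace ℝ (Fin n) → ℝ) (hf : ContDiff ℝ 1 f)
    (x : ℕ → EuclideanSpace ℝ (Fin n)) (t : ℕ → ℝ)
    (ht : ∀ k, 0 < t k)
    (tlow : ℝ) (htlow : 0 < tlow) (hlow : ∀ k, tlow ≤ t k)
    (β c : ℝ) (hβ : 0 < β) (hc : 0 < c)
    (hne : ∀ k, x (k + 1) ≠ x k)
    (h1 : ∀ᶠ k in atTop, β / t k * ‖x (k + 1) - x k‖ ^ 2 ≤ f (x k) - f (x (k + 1)))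
    (h2 : ∀ᶠ k in atTop, ‖gradient f (x k)‖ ≤ c / t k * ‖x (k + 1) - x k‖)
    (xbar : EuclideanSpace ℝ (Fin n))
    (hacc : ∃ φ : ℕ → ℕ, StrictMono φ ∧ Tendsto (x ∘ φ) atTop (nhds xbar))
    (M q : ℝ) (hM : 0 < M) (hq1 : q ≤ 1 / 2)
    (hKL : ∃ η > (0 : ℝ), ∃ U ∈ nhds xbar, ∀ y ∈ U,
      f xbar < f y → f y < f xbar + η → M * (f y - f xbar) ^ q ≤ ‖gradient f y‖) :
    ∃ C > (0 : ℝ), ∃ ρ : ℝ, 0 < ρ ∧ ρ < 1 ∧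
      ∀ᶠ k in atTop, ‖x k - xbar‖ ≤ C * ρ ^ k := by
  obtain ⟨φ, hφ, hφx⟩ := hacc
  obtain ⟨η, hη, U, hU, hKL⟩ := hKL
  obtain ⟨ε, hε, hεU⟩ := Metric.mem_nhds_iff.1 hU
  obtain ⟨N, hN⟩ := eventually_atTop.1 (h1.and h2)
  have hdecr : ∀ k ≥ N, f (x (k + 1)) < f (x k) := fun k hk => by
    have := mul_pos (div_pos hβ (ht k)) (pow_pos (norm_pos_iff.2 (sub_ne_zero.2 (hne k))) 2)
    linarith [(hN k hk).1]
  have hfφ : Tendsto ((fun k => f (x k)) ∘ φ) atTop (𝓝 (f xbar)) :=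
    (hf.continuous.tendsto xbar).comp hφx
  have hpos : ∀ k ≥ N, f xbar < f (x k) := fun _ => lt_of_succ_lt_of_tendsto_comp hdecr hφ hfφ
  have hlim : Tendsto (fun k => f (x k) - f xbar) atTop (𝓝 0) := by
    simpa using (tendsto_of_succ_lt_of_tendsto_comp hdecr hφ hfφ).sub_const (f xbar)
  set ρ := max (1 - β * M ^ 2 * tlow / c ^ 2) (1 / 2)
  have hs0 : 0 < √ρ := Real.sqrt_pos.2 (by positivity)
  have hs1 : √ρ < 1 := (Real.sqrt_lt' one_pos).2 <| by
    rw [one_pow]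
    exact max_lt (by linarith [show 0 < β * M ^ 2 * tlow / c ^ 2 by positivity]) (by norm_num)
  set a : ℕ → ℝ := fun k => c / (β * M) * √(f (x k) - f xbar)
  have hstep : ∀ᶠ k in atTop,
      dist (x k) xbar < ε → a (k + 1) ≤ √ρ * a k ∧ dist (x k) (x (k + 1)) ≤ a k := by
    filter_upwards [eventually_ge_atTop N, hlim.eventually_lt_const (lt_min hη one_pos)]
      with k hkN hk_small hk_ball
    have hgrad := (hKL _ (hεU hk_ball) (hpos k hkN)
      (by linarith [min_le_left η 1])).trans (hN k hkN).2
    rw [dist_comm, dist_eq_norm]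
    exact kl_sqrt_step hβ hc hM (ht k) (hlow k) (le_max_left _ _) hq1 (hpos k hkN)
      (hpos _ (by omega)).le (hk_small.le.trans (min_le_right _ _)) (hN k hkN).1 hgrad
  obtain ⟨C, hC, hxC⟩ := exists_dist_le_geometric_of_contraction hε hs0 hs1
    (fun k => by positivity) (by simpa using hlim.sqrt.const_mul (c / (β * M))) hφ hφx hstep
  exact ⟨C, hC, √ρ, hs0, hs1, by simpa only [dist_eq_norm] using hxC⟩

/-- Theorem 3.7(i): under the two descent-type conditions, stepsizes bounded away from
zero and the KL property with exponent `q ∈ (0, 1/2]` at an accumulation point `xbar`,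
the sequence `{x^k}` converges linearly to `xbar`. -/
theorem stmt9 {n : ℕ} (f : EuclideanSpace ℝ (Fin n) → ℝ) (hf : ContDiff ℝ 1 f)
    (x : ℕ → EuclideanSpace ℝ (Fin n)) (t : ℕ → ℝ)
    (ht : ∀ k, 0 < t k)
    (tlow : ℝ) (htlow : 0 < tlow) (hlow : ∀ k, tlow ≤ t k)
    (β c : ℝ) (hβ : 0 < β) (hc : 0 < c)
    (hne : ∀ k, x (k + 1) ≠ x k)
    (h1 : ∀ᶠ k in atTop, β / t k * ‖x (k + 1) - x k‖ ^ 2 ≤ f (x k) - f (x (k + 1)))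
    (h2 : ∀ᶠ k in atTop, ‖gradient f (x k)‖ ≤ c / t k * ‖x (k + 1) - x k‖)
    (xbar : EuclideanSpace ℝ (Fin n))
    (hacc : ∃ φ : ℕ → ℕ, StrictMono φ ∧ Tendsto (x ∘ φ) atTop (nhds xbar))
    (M q : ℝ) (hM : 0 < M) (hq0 : 0 < q) (hq1 : q ≤ 1 / 2)
    (hKL : ∃ η > (0 : ℝ), ∃ U ∈ nhds xbar, ∀ y ∈ U,
      f xbar < f y → f y < f xbar + η → M * (f y - f xbar) ^ q ≤ ‖gradient f y‖) :
    ∃ C > (0 : ℝ), ∃ ρ : ℝ, 0 < ρ ∧ ρ < 1 ∧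
      ∀ᶠ k in atTop, ‖x k - xbar‖ ≤ C * ρ ^ k :=
  stmt9_general f hf x t ht tlow htlow hlow β c hβ hc hne h1 h2 xbar hacc M q hM hq1 hKL
end

section
/- Let f: ℝⁿ → ℝ be continuously differentiable, let {x^k} ⊂ ℝⁿ and {t_k} ⊂ (0,∞) with {t_k} bounded away from 0, let β > 0 and c > 0, and assume x^{k+1} ≠ x^k for all k and, for all sufficiently large k, f(x^k) − f(x^{k+1}) ≥ (β/t_k)‖x^{k+1} − x^k‖² and ‖∇f(x^k)‖ ≤ (c/t_k)‖x^{k+1} − x^k‖. Suppose x̄ is an accumulation point of {x^k} and f satisfies the KL property at x̄ with ψ(t) = M t^q for some M > 0 and q ∈ (1/2, 1). Then there exists a constant ϱ > 0 such that ‖x^k − x̄‖ ≤ ϱ k^{−(1−q)/(2q−1)} for all sufficiently large k. -/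
open Filter


lemma bern_aux {p x : ℝ} (hp0 : 0 ≤ p) (hp1 : p ≤ 1) (hx : 0 ≤ x) :
    x ^ p ≤ (1 - p) + p * x := by
  have h := Real.geom_mean_le_arith_mean2_weighted (by linarith : (0:ℝ) ≤ 1 - p) hp0
    zero_le_one hx (by ring)
  simpa using h

lemma concave_aux {p a b : ℝ} (hp0 : 0 < p) (hp1 : p < 1) (ha : 0 < a) (hb : 0 ≤ b)
    (hba : b ≤ a) : p * a ^ (p - 1) * (a - b) ≤ a ^ p - b ^ p := by
  have hr : 0 ≤ b / a := by positivity
  have h := bern_aux hp0.le hp1.le hr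
  have hb' : b ^ p = a ^ p * (b / a) ^ p := by
    rw [← Real.mul_rpow ha.le hr]
    rw [mul_div_cancel₀ _ ha.ne']
  have hap : (0:ℝ) < a ^ p := Real.rpow_pos_of_pos ha p
  have key : a ^ p * (b / a) ^ p ≤ a ^ p * ((1 - p) + p * (b / a)) :=
    mul_le_mul_of_nonneg_left h hap.le
  have hpm1 : a ^ (p - 1) = a ^ p / a := by
    rw [Real.rpow_sub ha, Real.rpow_one]
  rw [hb', hpm1]
  have : a ^ p * ((1 - p) + p * (b / a)) = a ^ p - p * (a ^ p / a) * (a - b) := by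
    field_simp
    ring
  linarith [key.trans_eq this]

lemma convex_aux {γ a b : ℝ} (hγ0 : 0 < γ) (hγ1 : γ < 1) (hb : 0 < b) (hba : b ≤ a) :
    a ^ (-γ) + γ * a ^ (-(γ + 1)) * (a - b) ≤ b ^ (-γ) := by
  have ha : 0 < a := hb.trans_le hba
  have hr : 0 < b / a := by positivity
  have hr1 : b / a ≤ 1 := (div_le_one ha).2 hba
  have h := bern_aux hγ0.le hγ1.le hr.le
  set r := b / a with hrdef
  have hs0 : 0 ≤ γ * (1 - r) := by nlinarith
  have hs1 : γ * (1 - r) < 1 := by nlinarith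
  have hrγ : (0:ℝ) < r ^ γ := Real.rpow_pos_of_pos hr γ
  have h2 : r ^ γ ≤ 1 - γ * (1 - r) := by linarith
  have h3 : (1 + γ * (1 - r)) ≤ (r ^ γ)⁻¹ := by
    rw [← one_div]
    refine (le_div_iff₀ hrγ).2 ?_
    nlinarith [mul_le_mul_of_nonneg_left h2 (by linarith : (0:ℝ) ≤ 1 + γ * (1 - r))]
  have hrneg : r ^ (-γ) = (r ^ γ)⁻¹ := Real.rpow_neg hr.le γ
  have h4 : 1 + γ * (1 - r) ≤ r ^ (-γ) := by rw [hrneg]; exact h3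
  have hb' : b ^ (-γ) = a ^ (-γ) * r ^ (-γ) := by
    rw [← Real.mul_rpow ha.le hr.le, mul_div_cancel₀ _ ha.ne']
  have haγ : (0:ℝ) < a ^ (-γ) := Real.rpow_pos_of_pos ha _
  have key : a ^ (-γ) * (1 + γ * (1 - r)) ≤ b ^ (-γ) := by
    rw [hb']; exact mul_le_mul_of_nonneg_left h4 haγ.le
  have hexp : a ^ (-(γ + 1)) = a ^ (-γ) / a := by
    rw [neg_add, Real.rpow_add ha, Real.rpow_neg_one]
    ring
  have heq : a ^ (-γ) * (1 + γ * (1 - r)) = a ^ (-γ) + γ * (a ^ (-γ) / a) * (a - b) := by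
    rw [hrdef]; field_simp
  rw [hexp]
  linarith [heq ▸ key]

set_option maxHeartbeats 1000000

/-- Theorem 3.7(ii): under the two descent-type conditions, stepsizes bounded away from
zero and the KL property with exponent `q ∈ (1/2, 1)` at an accumulation point `xbar`,
one has `‖x^k - xbar‖ ≤ ϱ k^{-(1-q)/(2q-1)}` for all large `k` and some `ϱ > 0`. -/
theorem stmt10 {n : ℕ} (f : EuclideanSpace ℝ (Fin n) → ℝ) (hf : ContDiff ℝ 1 f)
    (x : ℕ → EuclideanSpace ℝ (Fin n)) (t : ℕ → ℝ)
    (ht : ∀ k, 0 < t k)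
    (tlow : ℝ) (htlow : 0 < tlow) (hlow : ∀ k, tlow ≤ t k)
    (β c : ℝ) (hβ : 0 < β) (hc : 0 < c)
    (hne : ∀ k, x (k + 1) ≠ x k)
    (h1 : ∀ᶠ k in atTop, β / t k * ‖x (k + 1) - x k‖ ^ 2 ≤ f (x k) - f (x (k + 1)))
    (h2 : ∀ᶠ k in atTop, ‖gradient f (x k)‖ ≤ c / t k * ‖x (k + 1) - x k‖)
    (xbar : EuclideanSpace ℝ (Fin n))
    (hacc : ∃ φ : ℕ → ℕ, StrictMono φ ∧ Tendsto (x ∘ φ) atTop (nhds xbar))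
    (M q : ℝ) (hM : 0 < M) (hq0 : 1 / 2 < q) (hq1 : q < 1)
    (hKL : ∃ η > (0 : ℝ), ∃ U ∈ nhds xbar, ∀ y ∈ U,
      f xbar < f y → f y < f xbar + η → M * (f y - f xbar) ^ q ≤ ‖gradient f y‖) :
    ∃ ϱ > (0 : ℝ), ∀ᶠ k in atTop,
      ‖x k - xbar‖ ≤ ϱ * (k : ℝ) ^ (-((1 - q) / (2 * q - 1))) := by
  obtain ⟨φ, hφ, hxφ⟩ := hacc
  obtain ⟨η, hη, U, hU, hKL'⟩ := hKL
  obtain ⟨ε, hε, hball⟩ := Metric.mem_nhds_iff.1 hU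
  obtain ⟨N1, h1'⟩ := eventually_atTop.1 h1
  obtain ⟨N2, h2'⟩ := eventually_atTop.1 h2
  set N₀ : ℕ := max N1 N2 with hN₀def
  have hq : 0 < q := by linarith
  have h1q : 0 < 1 - q := by linarith
  set γ : ℝ := 2 * q - 1 with hγdef
  have hγ0 : 0 < γ := by rw [hγdef]; linarith
  have hγ1 : γ < 1 := by rw [hγdef]; linarith
  set A : ℝ := c / (β * M * (1 - q)) with hAdef
  have hApos : 0 < A := by rw [hAdef]; positivity
  set C : ℝ := β * tlow * M ^ 2 / c ^ 2 with hCdef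
  have hCpos : 0 < C := by rw [hCdef]; positivity
  set Δ : ℕ → ℝ := fun k => f (x k) - f xbar with hΔdef
  have hΔeq : ∀ k, Δ k = f (x k) - f xbar := fun k => rfl
  clear_value γ A C Δ
  have hsp : ∀ k, 0 < ‖x (k + 1) - x k‖ :=
    fun k => norm_pos_iff.2 (sub_ne_zero.2 (hne k))
  -- strict decrease of Δ from N₀ on
  have hdec : ∀ k, N₀ ≤ k → Δ (k + 1) < Δ k := by
    intro k hk
    have h := h1' k (le_trans (le_max_left _ _) hk)
    have hpos : 0 < β / t k * ‖x (k + 1) - x k‖ ^ 2 :=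
      mul_pos (div_pos hβ (ht k)) (pow_pos (hsp k) 2)
    rw [hΔeq, hΔeq]
    linarith
  have hanti : ∀ k, N₀ ≤ k → ∀ m, k ≤ m → Δ m ≤ Δ k := by
    intro k hk m hm
    induction m, hm using Nat.le_induction with
    | base => exact le_rfl
    | succ m hm ih => exact le_trans (hdec m (hk.trans hm)).le ih
  have hφtop : Tendsto φ atTop atTop := hφ.tendsto_atTop
  have hΔφ : Tendsto (fun m => Δ (φ m)) atTop (nhds 0) := by
    have h := ((hf.continuous.tendsto xbar).comp hxφ).sub_const (f xbar)
    simpa [hΔdef, Function.comp] using h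
  have hnn : ∀ k, N₀ ≤ k → 0 ≤ Δ k := by
    intro k hk
    refine le_of_tendsto hΔφ ?_
    filter_upwards [hφtop.eventually_ge_atTop k] with m hm
    exact hanti k hk _ hm
  have hpos : ∀ k, N₀ ≤ k → 0 < Δ k := by
    intro k hk
    exact lt_of_le_of_lt (hnn (k + 1) (hk.trans (Nat.le_succ k))) (hdec k hk)
  -- per-step lemma
  have step : ∀ k, N₀ ≤ k → x k ∈ U → Δ k < η →
      ‖x (k + 1) - x k‖ ≤ A * (Δ k ^ (1 - q) - Δ (k + 1) ^ (1 - q)) ∧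
      Δ k ^ (-γ) + γ * C ≤ Δ (k + 1) ^ (-γ) := by
    intro k hk hUk hηk
    have hΔk : 0 < Δ k := hpos k hk
    have hΔk1 : 0 < Δ (k + 1) := hpos (k + 1) (hk.trans (Nat.le_succ k))
    have hΔlt : Δ (k + 1) < Δ k := hdec k hk
    set s : ℝ := ‖x (k + 1) - x k‖ with hsdef
    have hs : 0 < s := hsp k
    have htk : 0 < t k := ht k
    set D : ℝ := Δ k - Δ (k + 1) with hDdef
    have hD0 : 0 < D := by rw [hDdef]; linarith
    set P : ℝ := Δ k ^ q with hPdef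
    have hP : 0 < P := Real.rpow_pos_of_pos hΔk q
    have hkl : M * P ≤ ‖gradient f (x k)‖ := by
      have := hKL' (x k) hUk (by rw [hΔeq] at hΔk; linarith) (by rw [hΔeq] at hηk; linarith)
      rw [hPdef, hΔeq]
      exact this
    have ha : M * P ≤ c / t k * s := hkl.trans (h2' k (le_trans (le_max_right _ _) hk))
    have hb : β / t k * s ^ 2 ≤ D := by
      have := h1' k (le_trans (le_max_left _ _) hk)
      rw [hDdef, hΔeq, hΔeq]
      linarith
    have ha' : M * P * t k ≤ c * s := by
      have := mul_le_mul_of_nonneg_right ha htk.le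
      calc M * P * t k ≤ c / t k * s * t k := this
      _ = c * s := by field_simp
    -- key1 : s * (β * M * P) ≤ c * D
    have key1 : s * (β * M * P) ≤ c * D := by
      have hmul := mul_le_mul ha' hb
        (mul_nonneg (le_of_lt (div_pos hβ htk)) (sq_nonneg s))
        (mul_nonneg hc.le hs.le)
      have e1 : M * P * t k * (β / t k * s ^ 2) = s * (β * M * P) * s := by
        field_simp
      have e2 : c * s * D = c * D * s := by ring
      rw [e1, e2] at hmul
      exact le_of_mul_le_mul_right hmul hs
    constructor
    · -- first inequality
      have hcc := concave_aux h1q (by linarith) hΔk hΔk1.le hΔlt.le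
      have hexp : (1 - q) - 1 = -q := by ring
      rw [hexp] at hcc
      have hnegq : Δ k ^ (-q : ℝ) = P⁻¹ := by
        rw [hPdef, Real.rpow_neg hΔk.le]
      rw [hnegq] at hcc
      have e3 : A * ((1 - q) * P⁻¹ * (Δ k - Δ (k + 1))) ≤
          A * (Δ k ^ (1 - q) - Δ (k + 1) ^ (1 - q)) :=
        mul_le_mul_of_nonneg_left hcc hApos.le
      have e4 : A * ((1 - q) * P⁻¹ * (Δ k - Δ (k + 1))) = c * D / (β * M * P) := by
        rw [hAdef, hDdef]
        field_simp
      rw [e4] at e3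
      refine le_trans ?_ e3
      rw [le_div_iff₀ (by positivity)]
      calc s * (β * M * P) ≤ c * D := key1
      _ = c * D := rfl
    · -- second inequality
      have ha'' : M * P * t k / c ≤ s := by
        rw [div_le_iff₀ hc]
        calc M * P * t k ≤ c * s := ha'
        _ = s * c := by ring
      have hD2 : C * Δ k ^ (γ + 1) ≤ D := by
        have hPP : Δ k ^ (γ + 1) = P * P := by
          rw [hPdef, ← Real.rpow_add hΔk]
          congr 1
          rw [hγdef]; ring
        rw [hPP]
        -- from ha'' and hb : D ≥ β/t * s² ≥ β/t * (MPt/c)² = β M² P² t / c² ≥ C P P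
        have h5 : β / t k * (M * P * t k / c) ^ 2 ≤ β / t k * s ^ 2 := by
          apply mul_le_mul_of_nonneg_left _ (le_of_lt (div_pos hβ htk))
          exact pow_le_pow_left₀ (by positivity) ha'' 2
        have h6 : β / t k * (M * P * t k / c) ^ 2 = β * M ^ 2 * P ^ 2 * t k / c ^ 2 := by
          field_simp
        have h7 : C * (P * P) ≤ β * M ^ 2 * P ^ 2 * t k / c ^ 2 := by
          rw [hCdef]
          have e : β * tlow * M ^ 2 / c ^ 2 * (P * P) = β * M ^ 2 * P ^ 2 * tlow / c ^ 2 := by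
            ring
          rw [e]
          gcongr
          exact hlow k
        rw [h6] at h5
        linarith [h7, h5, hb]
      have hcx := convex_aux hγ0 hγ1 hΔk1 hΔlt.le
      have hone : Δ k ^ (-(γ + 1)) * Δ k ^ (γ + 1) = 1 := by
        rw [← Real.rpow_add hΔk, show -(γ + 1) + (γ + 1) = (0:ℝ) by ring, Real.rpow_zero]
      have hpw : (0:ℝ) < Δ k ^ (-(γ + 1)) := Real.rpow_pos_of_pos hΔk _
      have h8 : γ * Δ k ^ (-(γ + 1)) * (C * Δ k ^ (γ + 1)) ≤ γ * Δ k ^ (-(γ + 1)) * (Δ k - Δ (k + 1)) := by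
        apply mul_le_mul_of_nonneg_left _ (by positivity)
        rw [← hDdef]; exact hD2
      have h9 : γ * Δ k ^ (-(γ + 1)) * (C * Δ k ^ (γ + 1)) = γ * C := by
        linear_combination γ * C * hone
      linarith [hcx, h8, h9 ▸ h8]
  -- choose k₀
  have hex : ∃ m, N₀ ≤ φ m ∧ Δ (φ m) < η ∧ ‖x (φ m) - xbar‖ + A * Δ (φ m) ^ (1 - q) < ε := by
    have e1 : ∀ᶠ m in atTop, N₀ ≤ φ m := hφtop.eventually_ge_atTop N₀
    have e2 : ∀ᶠ m in atTop, Δ (φ m) < η := hΔφ.eventually_lt_const hη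
    have e3 : Tendsto (fun m => ‖x (φ m) - xbar‖ + A * Δ (φ m) ^ (1 - q)) atTop (nhds 0) := by
      have t1 : Tendsto (fun m => ‖x (φ m) - xbar‖) atTop (nhds 0) := by
        have := (hxφ.sub_const xbar).norm
        simpa using this
      have t2 : Tendsto (fun m => A * Δ (φ m) ^ (1 - q)) atTop (nhds 0) := by
        have := (hΔφ.rpow_const (Or.inr h1q.le)).const_mul A
        simpa [Real.zero_rpow (ne_of_gt h1q)] using this
      simpa using t1.add t2
    have e4 : ∀ᶠ m in atTop, ‖x (φ m) - xbar‖ + A * Δ (φ m) ^ (1 - q) < ε :=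
      e3.eventually_lt_const hε
    exact ((e1.and e2).and e4).exists.imp (fun m h => ⟨h.1.1, h.1.2, h.2⟩)
  obtain ⟨m₀, hm1, hm2, hm3⟩ := hex
  set k₀ : ℕ := φ m₀ with hk₀def
  -- Stage 1: distances from x k₀, with memberships
  have hS1 : ∀ j, ‖x (k₀ + j) - x k₀‖ ≤ A * (Δ k₀ ^ (1 - q) - Δ (k₀ + j) ^ (1 - q)) := by
    intro j
    induction j with
    | zero => simp
    | succ j ih =>
      have hkj : N₀ ≤ k₀ + j := hm1.trans (Nat.le_add_right _ _)
      have hdnn : 0 ≤ Δ (k₀ + j) ^ (1 - q) := Real.rpow_nonneg (hnn _ hkj) _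
      have hmemU : x (k₀ + j) ∈ U := by
        apply hball
        rw [Metric.mem_ball, dist_eq_norm]
        have htri : ‖x (k₀ + j) - xbar‖ ≤ ‖x (k₀ + j) - x k₀‖ + ‖x k₀ - xbar‖ := by
          have := dist_triangle (x (k₀ + j)) (x k₀) xbar
          simpa [dist_eq_norm] using this
        have hAd : A * (Δ k₀ ^ (1 - q) - Δ (k₀ + j) ^ (1 - q)) ≤ A * Δ k₀ ^ (1 - q) := by
          nlinarith [mul_nonneg hApos.le hdnn]
        linarith
      have hΔη : Δ (k₀ + j) < η :=
        lt_of_le_of_lt (hanti k₀ hm1 _ (Nat.le_add_right _ _)) hm2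
      obtain ⟨hstep1, -⟩ := step (k₀ + j) hkj hmemU hΔη
      have htri : ‖x (k₀ + j + 1) - x k₀‖ ≤
          ‖x (k₀ + j + 1) - x (k₀ + j)‖ + ‖x (k₀ + j) - x k₀‖ := by
        have := dist_triangle (x (k₀ + j + 1)) (x (k₀ + j)) (x k₀)
        simpa [dist_eq_norm] using this
      show ‖x (k₀ + j + 1) - x k₀‖ ≤ A * (Δ k₀ ^ (1 - q) - Δ (k₀ + j + 1) ^ (1 - q))
      linarith
  have hmemU : ∀ k, k₀ ≤ k → x k ∈ U := by
    intro k hk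
    obtain ⟨j, rfl⟩ := Nat.exists_eq_add_of_le hk
    apply hball
    rw [Metric.mem_ball, dist_eq_norm]
    have hkj : N₀ ≤ k₀ + j := hm1.trans (Nat.le_add_right _ _)
    have hdnn : 0 ≤ Δ (k₀ + j) ^ (1 - q) := Real.rpow_nonneg (hnn _ hkj) _
    have htri : ‖x (k₀ + j) - xbar‖ ≤ ‖x (k₀ + j) - x k₀‖ + ‖x k₀ - xbar‖ := by
      have := dist_triangle (x (k₀ + j)) (x k₀) xbar
      simpa [dist_eq_norm] using this
    have hAd : A * (Δ k₀ ^ (1 - q) - Δ (k₀ + j) ^ (1 - q)) ≤ A * Δ k₀ ^ (1 - q) := by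
      nlinarith [mul_nonneg hApos.le hdnn]
    linarith [hS1 j]
  -- Stage 2: tail bound from any k ≥ k₀
  have hS2 : ∀ k, k₀ ≤ k → ∀ j, ‖x (k + j) - x k‖ ≤ A * (Δ k ^ (1 - q) - Δ (k + j) ^ (1 - q)) := by
    intro k hk j
    induction j with
    | zero => simp
    | succ j ih =>
      have hkj : N₀ ≤ k + j := (hm1.trans hk).trans (Nat.le_add_right _ _)
      have hmem : x (k + j) ∈ U := hmemU (k + j) (hk.trans (Nat.le_add_right _ _))
      have hΔη : Δ (k + j) < η :=
        lt_of_le_of_lt (hanti k₀ hm1 _ ((hk.trans (Nat.le_add_right _ _)))) hm2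
      obtain ⟨hstep1, -⟩ := step (k + j) hkj hmem hΔη
      have htri : ‖x (k + j + 1) - x k‖ ≤
          ‖x (k + j + 1) - x (k + j)‖ + ‖x (k + j) - x k‖ := by
        have := dist_triangle (x (k + j + 1)) (x (k + j)) (x k)
        simpa [dist_eq_norm] using this
      show ‖x (k + j + 1) - x k‖ ≤ A * (Δ k ^ (1 - q) - Δ (k + j + 1) ^ (1 - q))
      linarith
  -- rate induction
  have hR : ∀ j, Δ k₀ ^ (-γ) + j * (γ * C) ≤ Δ (k₀ + j) ^ (-γ) := by
    intro j
    induction j with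
    | zero => simp
    | succ j ih =>
      have hkj : N₀ ≤ k₀ + j := hm1.trans (Nat.le_add_right _ _)
      have hmem : x (k₀ + j) ∈ U := hmemU (k₀ + j) (Nat.le_add_right _ _)
      have hΔη : Δ (k₀ + j) < η :=
        lt_of_le_of_lt (hanti k₀ hm1 _ (Nat.le_add_right _ _)) hm2
      obtain ⟨-, hstep2⟩ := step (k₀ + j) hkj hmem hΔη
      have hcast : ((j + 1 : ℕ) : ℝ) = (j : ℝ) + 1 := by push_cast; ring
      have hidx : k₀ + (j + 1) = k₀ + j + 1 := rfl
      rw [hidx, hcast]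
      linarith
  -- limit along subsequence: ‖x k - xbar‖ ≤ A * Δ k ^ (1-q)
  have hlim : ∀ k, k₀ ≤ k → ‖x k - xbar‖ ≤ A * Δ k ^ (1 - q) := by
    intro k hk
    have hev : ∀ᶠ m in atTop, ‖x (φ m) - x k‖ ≤ A * Δ k ^ (1 - q) := by
      filter_upwards [hφtop.eventually_ge_atTop k] with m hm
      obtain ⟨j, hj⟩ : ∃ j, φ m = k + j := ⟨φ m - k, by omega⟩
      rw [hj]
      have h := hS2 k hk j
      have hnn' : 0 ≤ Δ (k + j) ^ (1 - q) :=
        Real.rpow_nonneg (hnn _ ((hm1.trans hk).trans (Nat.le_add_right _ _))) _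
      nlinarith [mul_nonneg hApos.le hnn']
    have htnd : Tendsto (fun m => ‖x (φ m) - x k‖) atTop (nhds ‖xbar - x k‖) := by
      have := (hxφ.sub_const (x k)).norm
      simpa using this
    have := le_of_tendsto htnd hev
    rwa [norm_sub_rev] at this
  -- final bound
  refine ⟨A * (γ * C / 2) ^ (-((1 - q) / γ)), by positivity, ?_⟩
  rw [eventually_atTop]
  refine ⟨2 * k₀ + 2, fun k hk => ?_⟩
  have hk0 : k₀ ≤ k := by omega
  have hkN : N₀ ≤ k := hm1.trans hk0
  have hkpos : (0:ℝ) < (k:ℝ) := by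
    have : (1:ℕ) ≤ k := by omega
    exact_mod_cast Nat.lt_of_lt_of_le Nat.zero_lt_one this
  have hΔk : 0 < Δ k := hpos k hkN
  -- rate at k
  have hrk : γ * C / 2 * (k:ℝ) ≤ Δ k ^ (-γ) := by
    have h := hR (k - k₀)
    rw [show k₀ + (k - k₀) = k from by omega] at h
    have hcast : ((k - k₀ : ℕ) : ℝ) = (k:ℝ) - (k₀:ℝ) := Nat.cast_sub hk0
    rw [hcast] at h
    have hΔ0γ : 0 ≤ Δ k₀ ^ (-γ) := Real.rpow_nonneg (hnn _ hm1) _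
    have hhalf : (k:ℝ) / 2 ≤ (k:ℝ) - (k₀:ℝ) := by
      have h2k : (2 * k₀ + 2 : ℕ) ≤ k := hk
      have : (2 * (k₀:ℝ) + 2) ≤ (k:ℝ) := by exact_mod_cast h2k
      linarith
    have hmul := mul_le_mul_of_nonneg_left hhalf (mul_pos hγ0 hCpos).le
    linarith
  set B : ℝ := γ * C / 2 * (k:ℝ) with hBdef
  have hBpos : 0 < B := by rw [hBdef]; positivity
  have hinv : Δ k ≤ B ^ (-(1 / γ)) := by
    have h7 := Real.rpow_le_rpow_of_nonpos hBpos hrk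
      (neg_nonpos.2 (by positivity : (0:ℝ) ≤ 1 / γ))
    have e : (Δ k ^ (-γ)) ^ (-(1 / γ)) = Δ k := by
      rw [← Real.rpow_mul hΔk.le]
      rw [show (-γ) * (-(1 / γ)) = (1:ℝ) by field_simp, Real.rpow_one]
    rw [e] at h7
    exact h7
  have h8 : Δ k ^ (1 - q) ≤ (B ^ (-(1 / γ))) ^ (1 - q) :=
    Real.rpow_le_rpow hΔk.le hinv h1q.le
  have h9 : (B ^ (-(1 / γ))) ^ (1 - q) =
      (γ * C / 2) ^ (-((1 - q) / γ)) * (k:ℝ) ^ (-((1 - q) / γ)) := by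
    rw [← Real.rpow_mul hBpos.le]
    rw [show (-(1 / γ)) * (1 - q) = -((1 - q) / γ) by ring]
    rw [hBdef, Real.mul_rpow (by positivity) (Nat.cast_nonneg k)]
  calc ‖x k - xbar‖ ≤ A * Δ k ^ (1 - q) := hlim k hk0
    _ ≤ A * ((γ * C / 2) ^ (-((1 - q) / γ)) * (k:ℝ) ^ (-((1 - q) / γ))) := by
        rw [← h9]; exact mul_le_mul_of_nonneg_left h8 hApos.le
    _ = A * (γ * C / 2) ^ (-((1 - q) / γ)) * (k:ℝ) ^ (-((1 - q) / γ)) := by ring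
end

section
/- Let f: ℝⁿ → ℝ be differentiable at x, let ε > 0 and g ∈ ℝⁿ with g ≠ 0, ‖g‖ ≥ ε, and ‖g − ∇f(x)‖ ≤ ε, and define the reduced direction d := −((‖g‖ − ε)/‖g‖) g. Then the sufficient descent inequality ⟨∇f(x), d⟩ ≤ −‖d‖² holds. -/
/-!
Write `d = -c • g` with `c = (‖g‖ - ε) / ‖g‖ ≥ 0`, so that `‖d‖ = c ‖g‖ = ‖g‖ - ε`.
By Cauchy–Schwarz, `‖g‖² - ⟪∇f(x), g⟫ = ⟪g - ∇f(x), g⟫ ≤ ε ‖g‖`, i.e.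
`⟪∇f(x), g⟫ ≥ (‖g‖ - ε) ‖g‖`; multiplying by `c` gives `⟪∇f(x), -d⟫ ≥ ‖d‖²`.
-/

open RealInnerProductSpace

variable {E : Type*} [NormedAddCommGroup E] [InnerProductSpace ℝ E]

noncomputable def reducedDirection (g : E) (ε : ℝ) : E :=
  -(((‖g‖ - ε) / ‖g‖) • g)

lemma sub_mul_norm_le_inner_of_norm_sub_le {g v : E} {ε : ℝ} (hv : ‖g - v‖ ≤ ε) :
    (‖g‖ - ε) * ‖g‖ ≤ ⟪v, g⟫ := by
  have hcs : ⟪g - v, g⟫ ≤ ε * ‖g‖ :=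
    (real_inner_le_norm _ _).trans (mul_le_mul_of_nonneg_right hv (norm_nonneg g))
  rw [inner_sub_left, real_inner_self_eq_norm_sq] at hcs
  linarith

lemma inner_reducedDirection_le_neg_norm_sq {g v : E} {ε : ℝ} (hg : g ≠ 0)
    (hgε : ε ≤ ‖g‖) (hv : ‖g - v‖ ≤ ε) :
    ⟪v, reducedDirection g ε⟫ ≤ -‖reducedDirection g ε‖ ^ 2 := by
  have hng : 0 < ‖g‖ := norm_pos_iff.mpr hg
  set c := (‖g‖ - ε) / ‖g‖
  have hc : 0 ≤ c := div_nonneg (sub_nonneg.mpr hgε) hng.le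
  have hcg : c * ‖g‖ = ‖g‖ - ε := div_mul_cancel₀ _ hng.ne'
  rw [reducedDirection, inner_neg_right, real_inner_smul_right, norm_neg, norm_smul,
    Real.norm_of_nonneg hc, neg_le_neg_iff]
  calc (c * ‖g‖) ^ 2 = c * ((‖g‖ - ε) * ‖g‖) := by rw [← hcg]; ring
    _ ≤ c * ⟪v, g⟫ := mul_le_mul_of_nonneg_left (sub_mul_norm_le_inner_of_norm_sub_le hv) hc

theorem stmt12_general {n : ℕ} (f : EuclideanSpace ℝ (Fin n) → ℝ)
    (x : EuclideanSpace ℝ (Fin n))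
    (ε : ℝ) (g : EuclideanSpace ℝ (Fin n))
    (hg0 : g ≠ 0) (hgε : ε ≤ ‖g‖)
    (happrox : ‖g - gradient f x‖ ≤ ε)
    (d : EuclideanSpace ℝ (Fin n))
    (hd : d = -(((‖g‖ - ε) / ‖g‖) • g)) :
    (inner ℝ (gradient f x) d : ℝ) ≤ -‖d‖ ^ 2 := by
  subst hd
  exact inner_reducedDirection_le_neg_norm_sq hg0 hgε happrox

/-- Proposition 4.4: if `g` approximates `∇f(x)` with error `ε`, `g ≠ 0`, `‖g‖ ≥ ε`,
then the reduced direction `d = -((‖g‖ - ε)/‖g‖) g` satisfies the sufficient descent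
condition `⟨∇f(x), d⟩ ≤ -‖d‖²`. -/
theorem stmt12 {n : ℕ} (f : EuclideanSpace ℝ (Fin n) → ℝ)
    (x : EuclideanSpace ℝ (Fin n)) (hf : DifferentiableAt ℝ f x)
    (ε : ℝ) (hε : 0 < ε) (g : EuclideanSpace ℝ (Fin n))
    (hg0 : g ≠ 0) (hgε : ε ≤ ‖g‖)
    (happrox : ‖g - gradient f x‖ ≤ ε)
    (d : EuclideanSpace ℝ (Fin n))
    (hd : d = -(((‖g‖ - ε) / ‖g‖) • g)) :
    (inner ℝ (gradient f x) d : ℝ) ≤ -‖d‖ ^ 2 :=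
  stmt12_general f x ε g hg0 hgε happrox d hd
end

section
/- Let f: ℝⁿ → ℝ be continuously differentiable and let sequences {x^k}, {g^k}, {d^k}, {ε_k}, {r_k}, {ρ_k}, {t_k} follow the IRG scheme with backtracking stepsizes. Assume inf_k f(x^k) > −∞ and ρ_k → 0 as k → ∞. Then ε_k ↓ 0 and r_k ↓ 0 as k → ∞, and every accumulation point of {x^k} is a stationary point of f. -/
open Filter

/-- The general IRG scheme (Algorithm 1): inexact gradients `g^k` with automatically
controlled errors `ε_k` (and manual errors `ρ_k`), radius updates with factors
`μ, θ ∈ (0,1)`, reduced directions `d^k`, and iterations `x^{k+1} = x^k + t_k d^k`. -/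
def IRGScheme {n : ℕ} (f : EuclideanSpace ℝ (Fin n) → ℝ)
    (x g d : ℕ → EuclideanSpace ℝ (Fin n)) (ε r ρ t : ℕ → ℝ) (μ θ : ℝ) : Prop :=
  (0 < μ ∧ μ < 1) ∧ (0 < θ ∧ θ < 1) ∧
  (∀ k, 0 < ε k) ∧ (∀ k, 0 < r k) ∧ (∀ k, 0 < ρ k) ∧ (∀ k, 0 < t k) ∧
  (∀ k, ‖g k - gradient f (x k)‖ ≤ min (ε k) (ρ k)) ∧
  (∀ k, ‖g k‖ ≤ r k + ε k →
    r (k + 1) = μ * r k ∧ ε (k + 1) = θ * ε k ∧ d k = 0) ∧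
  (∀ k, r k + ε k < ‖g k‖ →
    r (k + 1) = r k ∧ ε (k + 1) = ε k ∧
      d k = -(((‖g k‖ - ε k) / ‖g k‖) • g k)) ∧
  (∀ k, x (k + 1) = x k + t k • d k)

/-- Backtracking stepsize selection: `t_k = τ` on null iterations, and otherwise
`t_k = γ^{m_k}` with `m_k` the smallest nonnegative integer satisfying the linesearch
condition `f(x^k + γ^m d^k) ≤ f(x^k) - β γ^m ‖d^k‖²`. -/
def BacktrackingStepsize {n : ℕ} (f : EuclideanSpace ℝ (Fin n) → ℝ)
    (x d : ℕ → EuclideanSpace ℝ (Fin n)) (t : ℕ → ℝ) (β γ τ : ℝ) : Prop :=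
  (0 < β ∧ β < 1) ∧ (0 < γ ∧ γ < 1) ∧ (0 < τ ∧ τ < 1) ∧
  (∀ k, d k = 0 → t k = τ) ∧
  (∀ k, d k ≠ 0 → ∃ m : ℕ,
    t k = γ ^ m ∧
    f (x k + γ ^ m • d k) ≤ f (x k) - β * γ ^ m * ‖d k‖ ^ 2 ∧
    ∀ j < m, ¬ f (x k + γ ^ j • d k) ≤ f (x k) - β * γ ^ j * ‖d k‖ ^ 2)

open scoped RealInnerProductSpace Topology

/-!
On a serious step the reduced direction satisfies `⟪∇f(x_k), d_k⟫ ≤ -‖d_k‖²`, and the Armijo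
decrease together with `inf f(x_k) > -∞` makes `∑ t_k ‖d_k‖²` finite. Suppose that along serious
steps `x_k → x̄` while `‖d_k‖` stays away from zero. Then `t_k ‖d_k‖ → 0`, so the stepsize was cut
back, and the rejected trial point `x_k + (t_k / γ) d_k` is close to `x_k`; by the mean value
theorem some point between them has `⟪∇f, d_k⟫ > -β ‖d_k‖²`, which contradicts the continuity of
`∇f` at `x̄`. If all late steps were serious, `r_k` would freeze, `‖d_k‖ > r_k` and the iterates
would form a Cauchy sequence, so this rules it out: null steps recur, and `ε_k, r_k → 0`
geometrically. Finally, at an accumulation point with `∇f(x̄) ≠ 0` the steps are eventually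
serious with `‖d_k‖ → ‖∇f(x̄)‖`, which is excluded in the same way.
-/

theorem tendsto_zero_of_antitone_of_frequently_le_mul {a : ℕ → ℝ} {θ : ℝ} (hθ : θ < 1)
    (ha0 : ∀ k, 0 ≤ a k) (ha : Antitone a) (hfreq : ∃ᶠ k in atTop, a (k + 1) ≤ θ * a k) :
    Tendsto a atTop (𝓝 0) := by
  have hlim := tendsto_atTop_ciInf ha ⟨0, Set.forall_mem_range.2 ha0⟩
  have hL0 : 0 ≤ ⨅ k, a k := le_ciInf ha0
  have hLθ : ⨅ k, a k ≤ θ * ⨅ k, a k :=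
    (isClosed_le continuous_const (continuous_const.mul continuous_id)).mem_of_frequently_of_tendsto
      (hfreq.mono fun k hk => (ciInf_le ⟨0, Set.forall_mem_range.2 ha0⟩ (k + 1)).trans hk) hlim
  rwa [show ⨅ k, a k = 0 by nlinarith] at hlim

theorem summable_of_mul_le_sub_succ {a u : ℕ → ℝ} {c : ℝ} (hc : 0 < c) (hu : ∀ k, 0 ≤ u k)
    (hdesc : ∀ k, c * u k ≤ a k - a (k + 1)) (ha : BddBelow (Set.range a)) : Summable u := by
  obtain ⟨B, hB⟩ := ha
  refine summable_of_sum_range_le (c := (a 0 - B) / c) hu fun K => ?_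
  rw [le_div_iff₀ hc]
  calc (∑ i ∈ Finset.range K, u i) * c = ∑ i ∈ Finset.range K, c * u i := by
        rw [Finset.sum_mul]; simp only [mul_comm]
    _ ≤ ∑ i ∈ Finset.range K, (a i - a (i + 1)) := Finset.sum_le_sum fun i _ => hdesc i
    _ = a 0 - a K := Finset.sum_range_sub' a K
    _ ≤ a 0 - B := by linarith [hB (Set.mem_range_self K)]

theorem mul_le_mul_sq_div {a b c : ℝ} (ha : 0 ≤ a) (hc : 0 < c) (hcb : c ≤ b) :
    a * b ≤ a * b ^ 2 / c := by
  rw [le_div_iff₀ hc, sq, ← mul_assoc]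
  exact mul_le_mul_of_nonneg_left hcb (mul_nonneg ha (hc.le.trans hcb))

section LineSearch

variable {E : Type*} [NormedAddCommGroup E] [InnerProductSpace ℝ E] [CompleteSpace E]

theorem ContDiff.continuous_gradient {f : E → ℝ} (hf : ContDiff ℝ 1 f) :
    Continuous (gradient f) :=
  (InnerProductSpace.toDual ℝ E).symm.continuous.comp (hf.continuous_fderiv one_ne_zero)

theorem HasGradientAt.hasDerivAt_add_smul {f : E → ℝ} {f' X D : E} {u : ℝ}
    (hf : HasGradientAt f f' (X + u • D)) :
    HasDerivAt (fun v : ℝ => f (X + v • D)) ⟪f', D⟫ u := by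
  have hline : HasDerivAt (fun v : ℝ => X + v • D) D u := by
    simpa using ((hasDerivAt_id u).smul_const D).const_add X
  simpa [Function.comp_def, InnerProductSpace.toDual_apply_apply] using
    hf.hasFDerivAt.comp_hasDerivAt u hline

theorem exists_inner_gradient_gt_of_mul_lt_sub {f : E → ℝ} (hf : Differentiable ℝ f)
    {X D : E} {s a : ℝ} (hs : 0 < s) (h : s * a < f (X + s • D) - f X) :
    ∃ ξ ∈ Set.Ioo 0 s, a < ⟪gradient f (X + ξ • D), D⟫ := by
  have hderiv u : HasDerivAt (fun v : ℝ => f (X + v • D)) ⟪gradient f (X + u • D), D⟫ u :=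
    (hf _).hasGradientAt.hasDerivAt_add_smul
  obtain ⟨ξ, hξ, hslope⟩ := exists_hasDerivAt_eq_slope _ _ hs
    (fun u _ => (hderiv u).continuousAt.continuousWithinAt) (fun u _ => hderiv u)
  refine ⟨ξ, hξ, ?_⟩
  rwa [hslope, zero_smul, add_zero, sub_zero, lt_div_iff₀ hs, mul_comm]

theorem not_tendsto_of_inner_gradient_gap {ι : Type*} {l : Filter ι} [l.NeBot] {f : E → ℝ}
    (hf : ContDiff ℝ 1 f) {X Y D : ι → E} {xbar : E} {β c : ℝ} (hβ : β < 1) (hc : 0 < c)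
    (hYX : Tendsto (fun j => Y j - X j) l (𝓝 0))
    (hD : ∀ᶠ j in l, c ≤ ‖D j‖ ∧ ⟪gradient f (X j), D j⟫ ≤ -‖D j‖ ^ 2 ∧
      -(β * ‖D j‖ ^ 2) < ⟪gradient f (Y j), D j⟫) :
    ¬ Tendsto X l (𝓝 xbar) := by
  intro hX
  have hY : Tendsto Y l (𝓝 xbar) := by simpa using hYX.add hX
  have hgap : Tendsto (fun j => gradient f (Y j) - gradient f (X j)) l (𝓝 0) := by
    simpa using (hf.continuous_gradient.tendsto xbar).comp hY |>.sub
      ((hf.continuous_gradient.tendsto xbar).comp hX)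
  have hsmall : ∀ᶠ j in l, ‖gradient f (Y j) - gradient f (X j)‖ < (1 - β) * c :=
    (tendsto_norm_zero.comp hgap).eventually (gt_mem_nhds (by nlinarith))
  obtain ⟨j, ⟨hcD, hXD, hYD⟩, hj⟩ := (hD.and hsmall).exists
  have hDpos : 0 < ‖D j‖ := hc.trans_le hcD
  have hgap_lower : (1 - β) * ‖D j‖ ^ 2 < ‖gradient f (Y j) - gradient f (X j)‖ * ‖D j‖ := by
    calc (1 - β) * ‖D j‖ ^ 2 < ⟪gradient f (Y j) - gradient f (X j), D j⟫ := by
          rw [inner_sub_left]; linarith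
      _ ≤ _ := real_inner_le_norm _ _
  nlinarith [mul_lt_mul_of_pos_right hj hDpos,
    mul_le_mul_of_nonneg_left hcD (by linarith : 0 ≤ 1 - β)]

end LineSearch

section Scheme

variable {n : ℕ} {f : EuclideanSpace ℝ (Fin n) → ℝ} {x g d : ℕ → EuclideanSpace ℝ (Fin n)}
  {ε r ρ t : ℕ → ℝ} {μ θ β γ τ : ℝ}

theorem BacktrackingStepsize.exists_inner_gradient_gt (hbt : BacktrackingStepsize f x d t β γ τ)
    (hf : Differentiable ℝ f) {k : ℕ} (hd : d k ≠ 0) (ht : t k < 1) :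
    ∃ y, ‖y - x k‖ ≤ t k / γ * ‖d k‖ ∧ -(β * ‖d k‖ ^ 2) < ⟪gradient f y, d k⟫ := by
  obtain ⟨-, ⟨hγ0, -⟩, -, -, hls⟩ := hbt
  obtain ⟨m, htm, -, hmin⟩ := hls k hd
  -- `t k < 1` forces `m ≥ 1`, and the trial stepsize `γ ^ (m - 1) = t k / γ` was rejected
  obtain ⟨m, rfl⟩ : ∃ m', m = m' + 1 :=
    Nat.exists_eq_succ_of_ne_zero (by rintro rfl; simp [htm] at ht)
  have hs : γ ^ m = t k / γ := by rw [htm, pow_succ]; field_simp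
  have hfail := lt_of_not_ge (hmin m m.lt_succ_self)
  obtain ⟨ξ, ⟨hξ0, hξs⟩, hξ⟩ := exists_inner_gradient_gt_of_mul_lt_sub hf (pow_pos hγ0 m)
    (a := -(β * ‖d k‖ ^ 2)) (by linarith)
  refine ⟨x k + ξ • d k, ?_, hξ⟩
  rw [add_sub_cancel_left, norm_smul, Real.norm_of_nonneg hξ0.le, ← hs]
  exact mul_le_mul_of_nonneg_right hξs.le (norm_nonneg _)

namespace IRGScheme

theorem antitone_eps (h : IRGScheme f x g d ε r ρ t μ θ) : Antitone ε := by
  obtain ⟨-, ⟨-, hθ1⟩, hε, -, -, -, -, hnull, hserious, -⟩ := h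
  refine antitone_nat_of_succ_le fun k => ?_
  rcases le_or_gt ‖g k‖ (r k + ε k) with hk | hk
  · rw [(hnull k hk).2.1]; nlinarith [hε k]
  · rw [(hserious k hk).2.1]

theorem antitone_radius (h : IRGScheme f x g d ε r ρ t μ θ) : Antitone r := by
  obtain ⟨⟨-, hμ1⟩, -, -, hr, -, -, -, hnull, hserious, -⟩ := h
  refine antitone_nat_of_succ_le fun k => ?_
  rcases le_or_gt ‖g k‖ (r k + ε k) with hk | hk
  · rw [(hnull k hk).1]; nlinarith [hr k]
  · rw [(hserious k hk).1]

theorem norm_d_of_serious (h : IRGScheme f x g d ε r ρ t μ θ) {k : ℕ}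
    (hk : r k + ε k < ‖g k‖) : ‖d k‖ = ‖g k‖ - ε k := by
  obtain ⟨-, -, hε, hr, -, -, -, -, hserious, -⟩ := h
  have hgpos : 0 < ‖g k‖ := by linarith [hε k, hr k]
  rw [(hserious k hk).2.2, norm_neg, norm_smul,
    Real.norm_of_nonneg (div_nonneg (by linarith [hr k]) hgpos.le)]
  field_simp

theorem inner_gradient_d_le_of_serious (h : IRGScheme f x g d ε r ρ t μ θ) {k : ℕ}
    (hk : r k + ε k < ‖g k‖) : ⟪gradient f (x k), d k⟫ ≤ -‖d k‖ ^ 2 := by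
  have hnorm := h.norm_d_of_serious hk
  obtain ⟨-, -, hε, hr, -, -, hgerr, -, hserious, -⟩ := h
  have hgpos : 0 < ‖g k‖ := by linarith [hε k, hr k]
  have hinner : ⟪g k, d k⟫ = -(‖d k‖ * ‖g k‖) := by
    rw [hnorm, (hserious k hk).2.2, inner_neg_right, real_inner_smul_right,
      real_inner_self_eq_norm_sq]
    field_simp
  have herr : -(ε k * ‖d k‖) ≤ ⟪g k - gradient f (x k), d k⟫ := by
    have := (abs_real_inner_le_norm (g k - gradient f (x k)) (d k)).trans
      (mul_le_mul_of_nonneg_right ((hgerr k).trans (min_le_left _ _)) (norm_nonneg _))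
    linarith [(abs_le.mp this).1]
  have hsplit : ‖d k‖ * ‖g k‖ = ‖d k‖ ^ 2 + ε k * ‖d k‖ := by rw [hnorm]; ring
  rw [inner_sub_left] at herr
  linarith

theorem f_succ_le (h : IRGScheme f x g d ε r ρ t μ θ) (hbt : BacktrackingStepsize f x d t β γ τ)
    (k : ℕ) : f (x (k + 1)) ≤ f (x k) - β * (t k * ‖d k‖ ^ 2) := by
  obtain ⟨-, -, -, -, -, -, -, -, -, hstep⟩ := h
  rw [hstep k]
  by_cases hd : d k = 0
  · simp [hd]
  · obtain ⟨m, htm, hle, -⟩ := hbt.2.2.2.2 k hd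
    rw [htm, ← mul_assoc]
    exact hle

theorem summable_t_mul_norm_d_sq (h : IRGScheme f x g d ε r ρ t μ θ)
    (hbt : BacktrackingStepsize f x d t β γ τ) (hinf : BddBelow (Set.range fun k => f (x k))) :
    Summable fun k => t k * ‖d k‖ ^ 2 := by
  have hdesc := h.f_succ_le hbt
  obtain ⟨-, -, -, -, -, ht, -⟩ := h
  exact summable_of_mul_le_sub_succ hbt.1.1 (fun k => mul_nonneg (ht k).le (sq_nonneg _))
    (fun k => by linarith [hdesc k]) hinf

theorem not_tendsto_comp_of_serious (h : IRGScheme f x g d ε r ρ t μ θ)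
    (hbt : BacktrackingStepsize f x d t β γ τ) (hf : ContDiff ℝ 1 f)
    (hinf : BddBelow (Set.range fun k => f (x k))) {ψ : ℕ → ℕ} (hψ : Tendsto ψ atTop atTop)
    {c : ℝ} (hc : 0 < c) (hser : ∀ᶠ j in atTop, r (ψ j) + ε (ψ j) < ‖g (ψ j)‖ ∧ c ≤ ‖d (ψ j)‖)
    (xbar : EuclideanSpace ℝ (Fin n)) : ¬ Tendsto (x ∘ ψ) atTop (𝓝 xbar) := by
  have ht : ∀ k, 0 < t k := h.2.2.2.2.2.1
  have htd : Tendsto (fun j => t (ψ j) * ‖d (ψ j)‖) atTop (𝓝 0) := by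
    have hsq := ((h.summable_t_mul_norm_d_sq hbt hinf).tendsto_atTop_zero.comp hψ).div_const c
    rw [zero_div] at hsq
    exact squeeze_zero' (Eventually.of_forall fun j => mul_nonneg (ht _).le (norm_nonneg _))
      (hser.mono fun j hj => mul_le_mul_sq_div (ht _).le hc hj.2) hsq
  have hshort : ∀ᶠ j in atTop, t (ψ j) < 1 := by
    filter_upwards [hser, htd.eventually (gt_mem_nhds hc)] with j hj hjc
    by_contra! ht1
    nlinarith [hj.2]
  choose! y hy_near hy_inner using fun k (hd : d k ≠ 0) (ht1 : t k < 1) =>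
    hbt.exists_inner_gradient_gt (hf.differentiable one_ne_zero) hd ht1
  have hd : ∀ᶠ j in atTop, d (ψ j) ≠ 0 :=
    hser.mono fun j hj => norm_pos_iff.mp (hc.trans_le hj.2)
  refine not_tendsto_of_inner_gradient_gap hf hbt.1.2 hc (Y := fun j => y (ψ j))
    (D := fun j => d (ψ j)) ?_ ?_
  · have hγ := htd.div_const γ
    rw [zero_div] at hγ
    refine squeeze_zero_norm' ?_ hγ
    filter_upwards [hd, hshort] with j hdj htj
    exact (hy_near _ hdj htj).trans_eq (div_mul_eq_mul_div _ _ _)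
  · filter_upwards [hser, hd, hshort] with j hj hdj htj
    exact ⟨hj.2, h.inner_gradient_d_le_of_serious hj.1, hy_inner _ hdj htj⟩

theorem frequently_null (h : IRGScheme f x g d ε r ρ t μ θ)
    (hbt : BacktrackingStepsize f x d t β γ τ) (hf : ContDiff ℝ 1 f)
    (hinf : BddBelow (Set.range fun k => f (x k))) : ∃ᶠ k in atTop, ‖g k‖ ≤ r k + ε k := by
  -- otherwise `r k = r K ≤ ‖d k‖` eventually, so `‖x (k + 1) - x k‖ ≤ t k ‖d k‖² / r K` is summable
  intro hser
  simp only [not_le] at hser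
  obtain ⟨K, hK⟩ := eventually_atTop.mp hser
  have hsum := h.summable_t_mul_norm_d_sq hbt hinf
  have hnorm k (hk : K ≤ k) := h.norm_d_of_serious (hK k hk)
  have hcore := h.not_tendsto_comp_of_serious hbt hf hinf tendsto_id (c := r K)
  obtain ⟨-, -, -, hr, -, ht, -, -, hserious, hstep⟩ := h
  have hrK : ∀ k ≥ K, r k = r K :=
    fun k hk => Nat.le_induction rfl (fun k hk ih => (hserious k (hK k hk)).1.trans ih) k hk
  have hdK : ∀ k ≥ K, r K ≤ ‖d k‖ := fun k hk => by
    rw [hnorm k hk, ← hrK k hk]; linarith [hK k hk]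
  have hdist : Summable fun k => dist (x k) (x (k + 1)) := by
    refine (hsum.div_const (r K)).of_norm_bounded_eventually_nat
      (eventually_atTop.2 ⟨K, fun k hk => ?_⟩)
    rw [Real.norm_of_nonneg dist_nonneg, dist_comm, dist_eq_norm, hstep k, add_sub_cancel_left,
      norm_smul, Real.norm_of_nonneg (ht k).le]
    exact mul_le_mul_sq_div (ht k).le (hr K) (hdK k hk)
  obtain ⟨xbar, hx⟩ := cauchySeq_tendsto_of_complete (cauchySeq_of_summable_dist hdist)
  exact hcore (hr K) (eventually_atTop.2 ⟨K, fun k hk => ⟨hK k hk, hdK k hk⟩⟩) xbar hx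

theorem tendsto_eps_radius_zero (h : IRGScheme f x g d ε r ρ t μ θ)
    (hbt : BacktrackingStepsize f x d t β γ τ) (hf : ContDiff ℝ 1 f)
    (hinf : BddBelow (Set.range fun k => f (x k))) :
    Tendsto ε atTop (𝓝 0) ∧ Tendsto r atTop (𝓝 0) := by
  have hfreq := h.frequently_null hbt hf hinf
  have hε_anti := h.antitone_eps
  have hr_anti := h.antitone_radius
  obtain ⟨⟨-, hμ1⟩, ⟨-, hθ1⟩, hε, hr, -, -, -, hnull, -⟩ := h
  exact ⟨tendsto_zero_of_antitone_of_frequently_le_mul hθ1 (fun k => (hε k).le) hε_anti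
      (hfreq.mono fun k hk => (hnull k hk).2.1.le),
    tendsto_zero_of_antitone_of_frequently_le_mul hμ1 (fun k => (hr k).le) hr_anti
      (hfreq.mono fun k hk => (hnull k hk).1.le)⟩

theorem gradient_eq_zero_of_tendsto_comp (h : IRGScheme f x g d ε r ρ t μ θ)
    (hbt : BacktrackingStepsize f x d t β γ τ) (hf : ContDiff ℝ 1 f)
    (hinf : BddBelow (Set.range fun k => f (x k))) (hρ : Tendsto ρ atTop (𝓝 0))
    {φ : ℕ → ℕ} (hφ : Tendsto φ atTop atTop) {xbar : EuclideanSpace ℝ (Fin n)}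
    (hx : Tendsto (x ∘ φ) atTop (𝓝 xbar)) : gradient f xbar = 0 := by
  by_contra hne
  have hG : 0 < ‖gradient f xbar‖ := norm_pos_iff.mpr hne
  have hgerr : ∀ k, ‖g k - gradient f (x k)‖ ≤ ρ k := fun k =>
    (h.2.2.2.2.2.2.1 k).trans (min_le_right _ _)
  have hg : Tendsto (fun j => g (φ j)) atTop (𝓝 (gradient f xbar)) := by
    have herr : Tendsto (fun j => g (φ j) - gradient f (x (φ j))) atTop (𝓝 0) :=
      squeeze_zero_norm (fun j => hgerr (φ j)) (hρ.comp hφ)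
    simpa using herr.add ((hf.continuous_gradient.tendsto xbar).comp hx)
  obtain ⟨hε, hr⟩ := h.tendsto_eps_radius_zero hbt hf hinf
  have hrε : Tendsto (fun j => r (φ j) + ε (φ j)) atTop (𝓝 0) := by
    simpa using (hr.comp hφ).add (hε.comp hφ)
  have hd : Tendsto (fun j => ‖g (φ j)‖ - ε (φ j)) atTop (𝓝 ‖gradient f xbar‖) := by
    simpa using hg.norm.sub (hε.comp hφ)
  refine h.not_tendsto_comp_of_serious hbt hf hinf hφ (half_pos hG) ?_ xbar hx
  filter_upwards [hrε.eventually_lt hg.norm hG, hd.eventually (lt_mem_nhds (half_lt_self hG))]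
    with j hj hj'
  exact ⟨hj, (h.norm_d_of_serious hj).symm ▸ hj'.le⟩

end IRGScheme

end Scheme

/-- Theorem 5.2: for the IRG method with backtracking stepsizes, if `inf f(x^k) > -∞`
and `ρ_k → 0`, then `ε_k ↓ 0`, `r_k ↓ 0`, and every accumulation point of `{x^k}` is a
stationary point of `f`. -/
theorem stmt15 {n : ℕ} (f : EuclideanSpace ℝ (Fin n) → ℝ) (hf : ContDiff ℝ 1 f)
    (x g d : ℕ → EuclideanSpace ℝ (Fin n)) (ε r ρ t : ℕ → ℝ) (μ θ β γ τ : ℝ)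
    (hirg : IRGScheme f x g d ε r ρ t μ θ)
    (hbt : BacktrackingStepsize f x d t β γ τ)
    (hinf : BddBelow (Set.range fun k => f (x k)))
    (hρ : Tendsto ρ atTop (nhds 0)) :
    Tendsto ε atTop (nhds 0) ∧ Tendsto r atTop (nhds 0) ∧
    ∀ xbar : EuclideanSpace ℝ (Fin n),
      (∃ φ : ℕ → ℕ, StrictMono φ ∧ Tendsto (x ∘ φ) atTop (nhds xbar)) →
      gradient f xbar = 0 := by
  obtain ⟨hε, hr⟩ := hirg.tendsto_eps_radius_zero hbt hf hinf
  refine ⟨hε, hr, ?_⟩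
  rintro xbar ⟨φ, hφ, hx⟩
  exact hirg.gradient_eq_zero_of_tendsto_comp hbt hf hinf hρ hφ.tendsto_atTop hx
end
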